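/- arXiv:2109.07214 — 6 statements merged into one kernel-verified Lean document; each statement's English description precedes it below -/
import Mathlib

section
/- Let X and Y be nonempty compact, perfect, totally disconnected metrizable spaces, and let P ⊆ X and K ⊆ Y be closed nowhere dense subsets. Then every homeomorphism f : P → K extends to a homeomorphism F : X → Y (i.e., F restricted to P agrees with f). -/
set_option linter.unusedSectionVars false

open Set Metric TopologicalSpace

section Helpers

lemma pairwise_fin_cases {α : Type*} {r : α → α → Prop} {n : ℕ} {a : α} {g : Fin n → α}
    (h0 : ∀ j, r a (g j)) (h0' : ∀ j, r (g j) a) (hg : Pairwise (Function.onFun r g)) :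
    Pairwise (Function.onFun r (Fin.cases a g : Fin (n+1) → α)) := by
  intro i j hij
  rcases Fin.eq_zero_or_eq_succ i with rfl | ⟨i', rfl⟩ <;>
    rcases Fin.eq_zero_or_eq_succ j with rfl | ⟨j', rfl⟩
  · exact absurd rfl hij
  · simpa only [Function.onFun, Fin.cases_zero, Fin.cases_succ] using h0 j'
  · simpa only [Function.onFun, Fin.cases_zero, Fin.cases_succ] using h0' i'
  · have : i' ≠ j' := fun h => hij (by rw [h])
    simpa only [Function.onFun, Fin.cases_succ] using hg this

variable {Z : Type*} [TopologicalSpace Z]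

/-- In a perfect space, a nonempty open set has two distinct points. -/
lemma two_points_of_open [PerfectSpace Z] {W : Set Z} (hW : IsOpen W) (hne : W.Nonempty) :
    ∃ x ∈ W, ∃ y ∈ W, x ≠ y := by
  obtain ⟨x, hx⟩ := hne
  have h : (W \ {x}).Nonempty := by
    have : W ∈ nhdsWithin x {x}ᶜ := Filter.mem_of_superset
      (nhdsWithin_le_nhds (hW.mem_nhds hx)) (by intro z hz; exact hz)
    have h2 : W ∩ {x}ᶜ ∈ nhdsWithin x {x}ᶜ :=
      Filter.inter_mem this self_mem_nhdsWithin
    exact (Filter.nonempty_of_mem h2).imp (fun z hz => ⟨hz.1, hz.2⟩)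
  obtain ⟨y, hyW, hyx⟩ := h
  exact ⟨y, hyW, x, hx, hyx⟩

variable [T2Space Z] [CompactSpace Z] [TotallyDisconnectedSpace Z]

/-- n pairwise disjoint nonempty clopen subsets of a nonempty open set in a
perfect compact totally disconnected Hausdorff space. -/
lemma disj_clopens [PerfectSpace Z] :
    ∀ (n : ℕ) (W : Set Z), IsOpen W → W.Nonempty →
    ∃ D : Fin n → Set Z,
      (∀ i, IsClopen (D i) ∧ (D i).Nonempty ∧ D i ⊆ W) ∧
      Pairwise (Function.onFun Disjoint D) := by
  intro n
  induction n with
  | zero => exact fun W _ _ => ⟨Fin.elim0, fun i => i.elim0, fun i => i.elim0⟩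
  | succ n ih =>
    intro W hW hWne
    obtain ⟨x, hx, y, hy, hxy⟩ := two_points_of_open hW hWne
    obtain ⟨C, hC, hxC, hCW⟩ := compact_exists_isClopen_in_isOpen
      (hW.sdiff isClosed_singleton) ⟨hx, hxy⟩
    have hWC : IsOpen (W \ C) := hW.sdiff hC.1
    have hWCne : (W \ C).Nonempty := ⟨y, hy, fun hyC => (hCW hyC).2 rfl⟩
    obtain ⟨D', hD', hD'disj⟩ := ih (W \ C) hWC hWCne
    refine ⟨Fin.cases C (fun i => D' i), ?_, ?_⟩
    · intro i
      refine Fin.cases ?_ (fun j => ?_) i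
      · exact ⟨hC, ⟨x, hxC⟩, fun z hz => (hCW hz).1⟩
      · exact ⟨(hD' j).1, (hD' j).2.1, fun z hz => ((hD' j).2.2 hz).1⟩
    · refine pairwise_fin_cases (fun j => ?_) (fun j => ?_) hD'disj
      · exact Set.disjoint_left.mpr fun z hz hz' => ((hD' j).2.2 hz').2 hz
      · exact Set.disjoint_left.mpr fun z hz hz' => ((hD' j).2.2 hz).2 hz'

/-- Separate a compact set from a disjoint closed set by a clopen set. -/
lemma sep_two {L M : Set Z} (hL : IsCompact L) (hM : IsClosed M) (h : Disjoint L M) :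
    ∃ C : Set Z, IsClopen C ∧ L ⊆ C ∧ Disjoint C M := by
  have : ∀ x : Z, x ∈ L → ∃ V : Set Z, IsClopen V ∧ x ∈ V ∧ V ⊆ Mᶜ := fun x hx =>
    compact_exists_isClopen_in_isOpen hM.isOpen_compl (Set.disjoint_left.mp h hx)
  choose V hVclopen hxV hVM using this
  obtain ⟨t, ht⟩ := hL.elim_nhds_subcover' (fun x hx => V x hx)
    (fun x hx => (hVclopen x hx).2.mem_nhds (hxV x hx))
  refine ⟨⋃ x ∈ t, V x x.2, ?_, ht, ?_⟩
  · exact Set.Finite.isClopen_biUnion t.finite_toSet (fun x _ => hVclopen x x.2)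
  · rw [Set.disjoint_left]
    intro z hz hzM
    simp only [Set.mem_iUnion] at hz
    obtain ⟨x, _, hzx⟩ := hz
    exact hVM x x.2 hzx hzM

/-- Separate finitely many pairwise disjoint compact sets by pairwise disjoint clopen sets. -/
lemma sep_fin : ∀ (s : ℕ) (L : Fin s → Set Z), (∀ i, IsCompact (L i)) →
    Pairwise (Function.onFun Disjoint L) →
    ∃ C : Fin s → Set Z, (∀ i, IsClopen (C i) ∧ L i ⊆ C i) ∧
      Pairwise (Function.onFun Disjoint C) := by
  intro s
  induction s with
  | zero => exact fun L _ _ => ⟨Fin.elim0, fun i => i.elim0, fun i => i.elim0⟩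
  | succ s ih =>
    intro L hLc hLd
    have hM : IsClosed (⋃ i : Fin s, L i.succ) :=
      isClosed_iUnion_of_finite (fun i => (hLc i.succ).isClosed)
    have hdisj : Disjoint (L 0) (⋃ i : Fin s, L i.succ) := by
      rw [Set.disjoint_iUnion_right]
      exact fun i => hLd (Fin.succ_ne_zero i).symm
    obtain ⟨C0, hC0, hLC0, hC0M⟩ := sep_two (hLc 0) hM hdisj
    obtain ⟨C', hC', hC'disj⟩ := ih (fun i => L i.succ) (fun i => hLc i.succ)
      (fun i j hij => hLd (fun h => hij (Fin.succ_injective _ h)))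
    refine ⟨Fin.cases C0 (fun i => C' i \ C0), ?_, ?_⟩
    · intro i
      refine Fin.cases ?_ (fun j => ?_) i
      · exact ⟨hC0, hLC0⟩
      · refine ⟨(hC' j).1.diff hC0, ?_⟩
        intro z hz
        exact ⟨(hC' j).2 hz, fun hzC0 => Set.disjoint_left.mp hC0M hzC0
          (Set.mem_iUnion.mpr ⟨j, hz⟩)⟩
    · refine pairwise_fin_cases (fun j => ?_) (fun j => ?_)
        (fun i j hij => ((hC'disj hij).mono Set.diff_subset Set.diff_subset))
      · exact Set.disjoint_left.mpr fun z hz hz' => hz'.2 hz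
      · exact Set.disjoint_left.mpr fun z hz hz' => hz.2 hz'

end Helpers

section Small

variable {Z : Type*} [MetricSpace Z] [CompactSpace Z] [TotallyDisconnectedSpace Z]

/-- Partition a nonempty clopen set into finitely many nonempty clopen pieces of small diameter. -/
lemma small_part (U : Set Z) (hU : IsClopen U) (hUne : U.Nonempty) {δ : ℝ} (hδ : 0 < δ) :
    ∃ (s : ℕ) (A : Fin s → Set Z), 0 < s ∧
      (∀ i, IsClopen (A i) ∧ (A i).Nonempty ∧ A i ⊆ U ∧ Metric.diam (A i) ≤ δ) ∧
      Pairwise (Function.onFun Disjoint A) ∧ (⋃ i, A i) = U := by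
  classical
  have hball : ∀ x : Z, ∃ V : Set Z, IsClopen V ∧ V ⊆ Metric.ball x (δ/2) ∩ U ∧
      (x ∈ U → x ∈ V) := by
    intro x
    by_cases hx : x ∈ U
    · obtain ⟨V, hV, hxV, hVsub⟩ := compact_exists_isClopen_in_isOpen
        (Metric.isOpen_ball.inter hU.2) ⟨Metric.mem_ball_self (show (0:ℝ) < δ/2 by linarith), hx⟩
      exact ⟨V, hV, hVsub, fun _ => hxV⟩
    · exact ⟨∅, isClopen_empty, Set.empty_subset _, fun h => absurd h hx⟩
  choose V hVclopen hVsub hxV using hball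
  obtain ⟨t, ht⟩ := (hU.1.isCompact).elim_nhds_subcover V
    (fun x hx => (hVclopen x).2.mem_nhds (hxV x hx))
  obtain ⟨m, ⟨e⟩⟩ : ∃ m : ℕ, Nonempty ({x // x ∈ t} ≃ Fin m) := ⟨t.card, ⟨t.equivFin⟩⟩
  set W : Fin m → Set Z := fun k => V ((e.symm k) : Z) with hW
  have hWclopen : ∀ k, IsClopen (W k) := fun k => hVclopen _
  have hWsub : ∀ k, W k ⊆ U := fun k z hz => (hVsub _ hz).2
  have hWdiam : ∀ k, Metric.diam (W k) ≤ δ := by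
    intro k
    calc Metric.diam (W k) ≤ Metric.diam (Metric.ball ((e.symm k) : Z) (δ/2)) :=
          Metric.diam_mono (fun z hz => (hVsub _ hz).1) Metric.isBounded_ball
      _ ≤ 2 * (δ/2) := Metric.diam_ball (by linarith)
      _ = δ := by ring
  have hWcover : U ⊆ ⋃ k, W k := by
    intro z hz
    obtain ⟨x, hxt, hzx⟩ := Set.mem_iUnion₂.mp (ht.2 hz)
    refine Set.mem_iUnion.mpr ⟨e ⟨x, hxt⟩, ?_⟩
    simpa [hW, Equiv.symm_apply_apply] using hzx
  -- disjointify
  set E : Fin m → Set Z := fun k => W k \ ⋃ l ∈ Finset.univ.filter (· < k), W l with hE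
  have hEclopen : ∀ k, IsClopen (E k) := fun k =>
    (hWclopen k).diff (Set.Finite.isClopen_biUnion (Set.toFinite _) (fun l _ => hWclopen l))
  have hEsub : ∀ k, E k ⊆ W k := fun k => Set.diff_subset
  have hEdisj : Pairwise (Function.onFun Disjoint E) := by
    intro i j hij
    rcases lt_or_gt_of_ne hij with h | h
    · exact Set.disjoint_left.mpr fun z hz hz' =>
        hz'.2 (Set.mem_iUnion₂.mpr ⟨i, by simp [h], hz.1⟩)
    · exact Set.disjoint_left.mpr fun z hz hz' =>
        hz.2 (Set.mem_iUnion₂.mpr ⟨j, by simp [h], hz'.1⟩)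
  have hEcover : (⋃ k, E k) = U := by
    apply Set.Subset.antisymm
    · exact Set.iUnion_subset fun k => (hEsub k).trans (hWsub k)
    · intro z hz
      obtain ⟨k, hk⟩ := Set.mem_iUnion.mp (hWcover hz)
      obtain ⟨k0, hk0, hk0min⟩ := Finset.exists_min_image
        (Finset.univ.filter (fun k => z ∈ W k)) id ⟨k, by simp [hk]⟩
      simp only [Finset.mem_filter, Finset.mem_univ, true_and] at hk0
      refine Set.mem_iUnion.mpr ⟨k0, hk0, ?_⟩
      intro hmem
      obtain ⟨l, hl, hzl⟩ := Set.mem_iUnion₂.mp hmem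
      simp only [Finset.mem_filter, Finset.mem_univ, true_and] at hl
      exact absurd (hk0min l (by simp [hzl])) (not_le.mpr hl)
  -- restrict to nonempty pieces
  set I := {k : Fin m // (E k).Nonempty} with hI
  obtain ⟨s, ⟨e2⟩⟩ : ∃ s : ℕ, Nonempty (I ≃ Fin s) := ⟨Fintype.card I, ⟨Fintype.equivFin I⟩⟩
  refine ⟨s, fun i => E (e2.symm i).1, ?_, ?_, ?_, ?_⟩
  · rcases hUne with ⟨z, hz⟩
    rw [← hEcover] at hz
    obtain ⟨k, hk⟩ := Set.mem_iUnion.mp hz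
    have hne : Nonempty I := ⟨⟨k, ⟨z, hk⟩⟩⟩
    exact Fin.pos_iff_nonempty.mpr (hne.map e2)
  · intro i
    exact ⟨hEclopen _, (e2.symm i).2, (hEsub _).trans (hWsub _),
      le_trans (Metric.diam_mono (hEsub _) (hWclopen _).1.isCompact.isBounded) (hWdiam _)⟩
  · intro i j hij
    refine hEdisj (fun h => hij ?_)
    have : (e2.symm i) = (e2.symm j) := Subtype.ext h
    simpa using congrArg e2 this
  · apply Set.Subset.antisymm
    · exact Set.iUnion_subset fun i => (hEsub _).trans (hWsub _)
    · intro z hz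
      rw [← hEcover] at hz
      obtain ⟨k, hk⟩ := Set.mem_iUnion.mp hz
      exact Set.mem_iUnion.mpr ⟨e2 ⟨k, ⟨z, hk⟩⟩, by simpa using hk⟩

end Small

section Main

variable {X Y : Type*} [MetricSpace X] [MetricSpace Y]
  [CompactSpace X] [CompactSpace Y] [PerfectSpace X] [PerfectSpace Y]
  [TotallyDisconnectedSpace X] [TotallyDisconnectedSpace Y]
  {P : Set X} {K : Set Y}

def Matched (f : P ≃ₜ K) (U : Set X) (V : Set Y) : Prop :=
  ∀ p : P, (p : X) ∈ U ↔ ((f p : K) : Y) ∈ V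

lemma Matched.symm {f : P ≃ₜ K} {U : Set X} {V : Set Y} (h : Matched f U V) :
    Matched f.symm V U := by
  intro q
  have h2 := h (f.symm q)
  have h3 : f (f.symm q) = q := f.apply_symm_apply q
  rw [h3] at h2
  exact h2.symm

lemma onestep (f : P ≃ₜ K) (hP : IsClosed P) (hK : IsClosed K) (hKnd : IsNowhereDense K)
    {U : Set X} {V : Set Y} (hU : IsClopen U) (hV : IsClopen V)
    (hUne : U.Nonempty) (hVne : V.Nonempty) (hM : Matched f U V) {δ : ℝ} (hδ : 0 < δ) :
    ∃ (s : ℕ) (A : Fin s → Set X) (B : Fin s → Set Y),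
      (∀ i, IsClopen (A i) ∧ (A i).Nonempty ∧ A i ⊆ U ∧ Metric.diam (A i) ≤ δ) ∧
      (∀ i, IsClopen (B i) ∧ (B i).Nonempty ∧ B i ⊆ V) ∧
      Pairwise (Function.onFun Disjoint A) ∧ Pairwise (Function.onFun Disjoint B) ∧
      (⋃ i, A i) = U ∧ (⋃ i, B i) = V ∧ ∀ i, Matched f (A i) (B i) := by
  classical
  obtain ⟨s, A, hspos, hA, hAdisj, hAcover⟩ := small_part U hU hUne hδ
  haveI : CompactSpace P := isCompact_iff_compactSpace.mp hP.isCompact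
  set L : Fin s → Set Y := fun i => (fun p : P => ((f p : K) : Y)) '' (Subtype.val ⁻¹' (A i))
    with hL
  have hfc : Continuous (fun p : P => ((f p : K) : Y)) :=
    continuous_subtype_val.comp f.continuous
  have hLcpt : ∀ i, IsCompact (L i) := fun i =>
    (((hA i).1.1.preimage continuous_subtype_val).isCompact).image hfc
  have hLK : ∀ i, L i ⊆ K := by
    rintro i y ⟨p, _, rfl⟩; exact (f p).2
  have hLV : ∀ i, L i ⊆ V := by
    rintro i y ⟨p, hp, rfl⟩
    exact (hM p).mp ((hA i).2.2.1 hp)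
  have hLdisj : Pairwise (Function.onFun Disjoint L) := by
    intro i j hij
    rw [Function.onFun, Set.disjoint_left]
    rintro y ⟨p, hp, rfl⟩ ⟨p', hp', hpp'⟩
    have : p' = p := f.injective (Subtype.val_injective hpp')
    subst this
    exact Set.disjoint_left.mp (hAdisj hij) hp hp'
  have hVK : IsOpen (V \ K) := hV.2.sdiff hK
  have hVKne : (V \ K).Nonempty := by
    rw [Set.diff_nonempty]
    intro hVsub
    have : V ⊆ interior (closure K) :=
      interior_maximal (hVsub.trans subset_closure) hV.2
    rw [hKnd] at this
    exact (this hVne.some_mem)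
  obtain ⟨D, hD, hDdisj⟩ := disj_clopens s (V \ K) hVK hVKne
  set M : Fin s → Set Y := fun i => L i ∪ D i with hMdef
  have hMcpt : ∀ i, IsCompact (M i) := fun i =>
    (hLcpt i).union (hD i).1.1.isCompact
  have hMdisj : Pairwise (Function.onFun Disjoint M) := by
    intro i j hij
    rw [Function.onFun, Set.disjoint_left]
    rintro y (hy | hy) (hy' | hy')
    · exact Set.disjoint_left.mp (hLdisj hij) hy hy'
    · exact ((hD j).2.2 hy').2 (hLK i hy)
    · exact ((hD i).2.2 hy).2 (hLK j hy')
    · exact Set.disjoint_left.mp (hDdisj hij) hy hy'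
  obtain ⟨C, hC, hCdisj⟩ := sep_fin s M hMcpt hMdisj
  set i₀ : Fin s := ⟨0, hspos⟩ with hi₀
  set B : Fin s → Set Y :=
    fun i => if i = i₀ then V \ ⋃ j ∈ Finset.univ.filter (· ≠ i₀), (C j ∩ V)
      else C i ∩ V with hB
  have hBsubV : ∀ i, B i ⊆ V := by
    intro i
    rw [hB]; dsimp only
    split
    · exact Set.diff_subset
    · exact Set.inter_subset_right
  have hBclopen : ∀ i, IsClopen (B i) := by
    intro i
    rw [hB]; dsimp only
    split
    · exact hV.diff (Set.Finite.isClopen_biUnion (Set.toFinite _)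
        (fun j _ => ((hC j).1.inter hV)))
    · exact (hC i).1.inter hV
  have hMB : ∀ i, M i ⊆ B i := by
    intro i y hy
    have hyC : y ∈ C i := (hC i).2 hy
    have hyV : y ∈ V := by
      rcases hy with hy | hy
      · exact hLV i hy
      · exact ((hD i).2.2 hy).1
    by_cases h : i = i₀
    · rw [hB]; simp only [if_pos h]
      refine ⟨hyV, ?_⟩
      intro hmem
      obtain ⟨j, hj, hyj⟩ := Set.mem_iUnion₂.mp hmem
      simp only [Finset.mem_filter, Finset.mem_univ, true_and] at hj
      subst h
      exact Set.disjoint_left.mp (hCdisj (Ne.symm hj)) hyC hyj.1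
    · rw [hB]; simp only [if_neg h]
      exact ⟨hyC, hyV⟩
  have hBne : ∀ i, (B i).Nonempty := fun i =>
    ((hD i).2.1).mono (fun y hy => hMB i (Or.inr hy))
  have hBdisj : Pairwise (Function.onFun Disjoint B) := by
    intro i j hij
    rw [Function.onFun, Set.disjoint_left]
    intro y hyi hyj
    by_cases hi : i = i₀ <;> by_cases hj : j = i₀
    · exact hij (hi.trans hj.symm)
    · rw [hB] at hyi hyj; simp only [if_pos hi, if_neg hj] at hyi hyj
      exact hyi.2 (Set.mem_iUnion₂.mpr ⟨j, by simp [hj], hyj⟩)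
    · rw [hB] at hyi hyj; simp only [if_neg hi, if_pos hj] at hyi hyj
      exact hyj.2 (Set.mem_iUnion₂.mpr ⟨i, by simp [hi], hyi⟩)
    · rw [hB] at hyi hyj; simp only [if_neg hi, if_neg hj] at hyi hyj
      exact Set.disjoint_left.mp (hCdisj hij) hyi.1 hyj.1
  have hBcover : (⋃ i, B i) = V := by
    apply Set.Subset.antisymm (Set.iUnion_subset hBsubV)
    intro y hy
    by_cases h : ∃ j, j ≠ i₀ ∧ y ∈ C j
    · obtain ⟨j, hj, hyj⟩ := h
      exact Set.mem_iUnion.mpr ⟨j, by rw [hB]; simp only [if_neg hj]; exact ⟨hyj, hy⟩⟩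
    · push_neg at h
      refine Set.mem_iUnion.mpr ⟨i₀, ?_⟩
      rw [hB]; simp only [if_pos rfl]
      refine ⟨hy, ?_⟩
      intro hmem
      obtain ⟨j, hj, hyj⟩ := Set.mem_iUnion₂.mp hmem
      simp only [Finset.mem_filter, Finset.mem_univ, true_and] at hj
      exact (h j hj) hyj.1
  have hBK : ∀ i, B i ∩ K ⊆ L i := by
    intro i y ⟨hyB, hyK⟩
    have hyV : y ∈ V := hBsubV i hyB
    set q : P := f.symm ⟨y, hyK⟩ with hq
    have hfq : ((f q : K) : Y) = y := by rw [hq, f.apply_symm_apply]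
    have hqU : (q : X) ∈ U := (hM q).mpr (by rw [hfq]; exact hyV)
    rw [← hAcover] at hqU
    obtain ⟨j, hqj⟩ := Set.mem_iUnion.mp hqU
    have hyL : y ∈ L j := ⟨q, hqj, hfq⟩
    have hyCj : y ∈ C j := (hC j).2 (Or.inl hyL)
    have hji : j = i := by
      by_contra hji
      by_cases hi : i = i₀
      · rw [hB] at hyB; simp only [if_pos hi] at hyB
        refine hyB.2 (Set.mem_iUnion₂.mpr ⟨j, ?_, hyCj, hyV⟩)
        simp [hi ▸ hji]
      · rw [hB] at hyB; simp only [if_neg hi] at hyB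
        exact Set.disjoint_left.mp (hCdisj hji) hyCj hyB.1
    rwa [hji] at hyL
  refine ⟨s, A, B, hA, fun i => ⟨hBclopen i, hBne i, hBsubV i⟩, hAdisj, hBdisj,
    hAcover, hBcover, ?_⟩
  intro i p
  constructor
  · intro hp
    exact hMB i (Or.inl ⟨p, hp, rfl⟩)
  · intro hfp
    obtain ⟨p', hp', hpp'⟩ := hBK i ⟨hfp, (f p).2⟩
    have : p' = p := f.injective (Subtype.val_injective hpp')
    exact this ▸ hp'

lemma twostep (f : P ≃ₜ K) (hP : IsClosed P) (hK : IsClosed K)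
    (hPnd : IsNowhereDense P) (hKnd : IsNowhereDense K)
    {U : Set X} {V : Set Y} (hU : IsClopen U) (hV : IsClopen V)
    (hUne : U.Nonempty) (hVne : V.Nonempty) (hM : Matched f U V) {δ : ℝ} (hδ : 0 < δ) :
    ∃ (ι : Type) (_ : Fintype ι) (A : ι → Set X) (B : ι → Set Y),
      (∀ i, IsClopen (A i) ∧ (A i).Nonempty ∧ A i ⊆ U ∧ Metric.diam (A i) ≤ δ) ∧
      (∀ i, IsClopen (B i) ∧ (B i).Nonempty ∧ B i ⊆ V ∧ Metric.diam (B i) ≤ δ) ∧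
      Pairwise (Function.onFun Disjoint A) ∧ Pairwise (Function.onFun Disjoint B) ∧
      (⋃ i, A i) = U ∧ (⋃ i, B i) = V ∧ ∀ i, Matched f (A i) (B i) := by
  obtain ⟨s, A, B, hA, hB, hAdisj, hBdisj, hAcov, hBcov, hmat⟩ :=
    onestep f hP hK hKnd hU hV hUne hVne hM hδ
  have step2 : ∀ i : Fin s, ∃ (s' : ℕ) (B' : Fin s' → Set Y) (A' : Fin s' → Set X),
      (∀ j, IsClopen (B' j) ∧ (B' j).Nonempty ∧ B' j ⊆ B i ∧ Metric.diam (B' j) ≤ δ) ∧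
      (∀ j, IsClopen (A' j) ∧ (A' j).Nonempty ∧ A' j ⊆ A i) ∧
      Pairwise (Function.onFun Disjoint B') ∧ Pairwise (Function.onFun Disjoint A') ∧
      (⋃ j, B' j) = B i ∧ (⋃ j, A' j) = A i ∧ ∀ j, Matched f.symm (B' j) (A' j) :=
    fun i => onestep f.symm hK hP hPnd (hB i).1 (hA i).1 (hB i).2.1 (hA i).2.1
      (hmat i).symm hδ
  choose s' B' A' hB' hA' hB'disj hA'disj hB'cov hA'cov hmat' using step2
  refine ⟨(Σ i : Fin s, Fin (s' i)), inferInstance,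
    fun ij => A' ij.1 ij.2, fun ij => B' ij.1 ij.2, ?_, ?_, ?_, ?_, ?_, ?_, ?_⟩
  · rintro ⟨i, j⟩
    refine ⟨(hA' i j).1, (hA' i j).2.1, (hA' i j).2.2.trans (hA i).2.2.1, ?_⟩
    exact le_trans (Metric.diam_mono (hA' i j).2.2 (hA i).1.1.isCompact.isBounded)
      (hA i).2.2.2
  · rintro ⟨i, j⟩
    exact ⟨(hB' i j).1, (hB' i j).2.1, (hB' i j).2.2.1.trans (hB i).2.2,
      (hB' i j).2.2.2⟩
  · rintro ⟨i, j⟩ ⟨i', j'⟩ hne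
    by_cases hii : i = i'
    · subst hii
      have hjj : j ≠ j' := fun h => hne (by rw [h])
      exact hA'disj i hjj
    · exact ((hAdisj hii).mono (hA' i j).2.2 (hA' i' j').2.2)
  · rintro ⟨i, j⟩ ⟨i', j'⟩ hne
    by_cases hii : i = i'
    · subst hii
      have hjj : j ≠ j' := fun h => hne (by rw [h])
      exact hB'disj i hjj
    · exact ((hBdisj hii).mono (hB' i j).2.2.1 (hB' i' j').2.2.1)
  · rw [Set.iUnion_sigma]
    rw [← hAcov]
    exact Set.iUnion_congr (fun i => hA'cov i)
  · rw [Set.iUnion_sigma]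
    rw [← hBcov]
    exact Set.iUnion_congr (fun i => hB'cov i)
  · rintro ⟨i, j⟩ p
    have h := hmat' i j (f p)
    have h2 : f.symm (f p) = p := f.symm_apply_apply p
    rw [h2] at h
    exact h.symm

variable (f : P ≃ₜ K)

structure KRP where
  ι : Type
  [ft : Fintype ι]
  A : ι → Set X
  B : ι → Set Y
  clopenA : ∀ i, IsClopen (A i)
  clopenB : ∀ i, IsClopen (B i)
  neA : ∀ i, (A i).Nonempty
  neB : ∀ i, (B i).Nonempty
  disjA : Pairwise (Function.onFun Disjoint A)
  disjB : Pairwise (Function.onFun Disjoint B)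
  covA : (⋃ i, A i) = Set.univ
  covB : (⋃ i, B i) = Set.univ
  matched : ∀ i, Matched f (A i) (B i)

attribute [instance] KRP.ft

variable {f}

def KRP.symm (Q : KRP f) : KRP f.symm where
  ι := Q.ι
  A := Q.B
  B := Q.A
  clopenA := Q.clopenB
  clopenB := Q.clopenA
  neA := Q.neB
  neB := Q.neA
  disjA := Q.disjB
  disjB := Q.disjA
  covA := Q.covB
  covB := Q.covA
  matched := fun i => (Q.matched i).symm

def KRP.Small (Q : KRP f) (δ : ℝ) : Prop :=
  ∀ i, Metric.diam (Q.A i) ≤ δ ∧ Metric.diam (Q.B i) ≤ δ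

def KRP.Refines (Q' Q : KRP f) : Prop :=
  ∃ r : Q'.ι → Q.ι, ∀ i, Q'.A i ⊆ Q.A (r i) ∧ Q'.B i ⊆ Q.B (r i)

lemma KRP.Small.symm {Q : KRP f} {δ : ℝ} (h : Q.Small δ) : Q.symm.Small δ :=
  fun i => ⟨(h i).2, (h i).1⟩

lemma KRP.Refines.symm {Q' Q : KRP f} (h : Q'.Refines Q) : Q'.symm.Refines Q.symm := by
  obtain ⟨r, hr⟩ := h
  exact ⟨r, fun i => ⟨(hr i).2, (hr i).1⟩⟩

variable (f) in
/-- The trivial partition. -/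
def KRP.base [Nonempty X] [Nonempty Y] : KRP f where
  ι := PUnit
  A := fun _ => Set.univ
  B := fun _ => Set.univ
  clopenA := fun _ => isClopen_univ
  clopenB := fun _ => isClopen_univ
  neA := fun _ => Set.univ_nonempty
  neB := fun _ => Set.univ_nonempty
  disjA := fun i j hij => absurd rfl hij
  disjB := fun i j hij => absurd rfl hij
  covA := Set.iUnion_const _
  covB := Set.iUnion_const _
  matched := fun _ p => by simp

lemma refine_exists (hP : IsClosed P) (hK : IsClosed K)
    (hPnd : IsNowhereDense P) (hKnd : IsNowhereDense K) (Q : KRP f) {δ : ℝ} (hδ : 0 < δ) :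
    ∃ Q' : KRP f, Q'.Refines Q ∧ Q'.Small δ := by
  have step : ∀ i : Q.ι, ∃ (ι : Type) (_ : Fintype ι) (A : ι → Set X) (B : ι → Set Y),
      (∀ j, IsClopen (A j) ∧ (A j).Nonempty ∧ A j ⊆ Q.A i ∧ Metric.diam (A j) ≤ δ) ∧
      (∀ j, IsClopen (B j) ∧ (B j).Nonempty ∧ B j ⊆ Q.B i ∧ Metric.diam (B j) ≤ δ) ∧
      Pairwise (Function.onFun Disjoint A) ∧ Pairwise (Function.onFun Disjoint B) ∧
      (⋃ j, A j) = Q.A i ∧ (⋃ j, B j) = Q.B i ∧ ∀ j, Matched f (A j) (B j) :=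
    fun i => twostep f hP hK hPnd hKnd (Q.clopenA i) (Q.clopenB i) (Q.neA i) (Q.neB i)
      (Q.matched i) hδ
  choose ι inst A B hA hB hAdisj hBdisj hAcov hBcov hmat using step
  refine ⟨⟨Σ i : Q.ι, ι i, fun ij => A ij.1 ij.2, fun ij => B ij.1 ij.2,
    fun ij => (hA ij.1 ij.2).1, fun ij => (hB ij.1 ij.2).1,
    fun ij => (hA ij.1 ij.2).2.1, fun ij => (hB ij.1 ij.2).2.1, ?_, ?_, ?_, ?_, ?_⟩,
    ⟨Sigma.fst, fun ij => ⟨(hA ij.1 ij.2).2.2.1, (hB ij.1 ij.2).2.2.1⟩⟩,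
    fun ij => ⟨(hA ij.1 ij.2).2.2.2, (hB ij.1 ij.2).2.2.2⟩⟩
  · rintro ⟨i, j⟩ ⟨i', j'⟩ hne
    by_cases hii : i = i'
    · subst hii
      have hjj : j ≠ j' := fun h => hne (by rw [h])
      exact hAdisj i hjj
    · exact ((Q.disjA hii).mono (hA i j).2.2.1 (hA i' j').2.2.1)
  · rintro ⟨i, j⟩ ⟨i', j'⟩ hne
    by_cases hii : i = i'
    · subst hii
      have hjj : j ≠ j' := fun h => hne (by rw [h])
      exact hBdisj i hjj
    · exact ((Q.disjB hii).mono (hB i j).2.2.1 (hB i' j').2.2.1)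
  · rw [Set.iUnion_sigma, ← Q.covA]
    exact Set.iUnion_congr hAcov
  · rw [Set.iUnion_sigma, ← Q.covB]
    exact Set.iUnion_congr hBcov
  · exact fun ij => hmat ij.1 ij.2

variable [Nonempty X] [Nonempty Y]

variable (f) in
noncomputable def krpSeq (hP : IsClosed P) (hK : IsClosed K)
    (hPnd : IsNowhereDense P) (hKnd : IsNowhereDense K) : ℕ → KRP f
  | 0 => KRP.base f
  | n + 1 => (refine_exists hP hK hPnd hKnd (krpSeq hP hK hPnd hKnd n)
      (show (0:ℝ) < (1/2)^(n+1) by positivity)).choose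

lemma krpSeq_refines (hP : IsClosed P) (hK : IsClosed K)
    (hPnd : IsNowhereDense P) (hKnd : IsNowhereDense K) (n : ℕ) :
    (krpSeq f hP hK hPnd hKnd (n+1)).Refines (krpSeq f hP hK hPnd hKnd n) := by
  rw [krpSeq]
  exact (refine_exists hP hK hPnd hKnd _ (show (0:ℝ) < (1/2)^(n+1) by positivity)).choose_spec.1

lemma krpSeq_small (hP : IsClosed P) (hK : IsClosed K)
    (hPnd : IsNowhereDense P) (hKnd : IsNowhereDense K) (n : ℕ) :
    (krpSeq f hP hK hPnd hKnd (n+1)).Small ((1/2)^(n+1)) := by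
  rw [krpSeq]
  exact (refine_exists hP hK hPnd hKnd _ (show (0:ℝ) < (1/2)^(n+1) by positivity)).choose_spec.2

noncomputable def KRP.idxA (Q : KRP f) (x : X) : Q.ι :=
  (Set.mem_iUnion.mp (Q.covA.symm ▸ Set.mem_univ x)).choose

lemma KRP.idxA_mem (Q : KRP f) (x : X) : x ∈ Q.A (Q.idxA x) :=
  (Set.mem_iUnion.mp (Q.covA.symm ▸ Set.mem_univ x)).choose_spec

lemma KRP.idxA_eq (Q : KRP f) {x : X} {i : Q.ι} (h : x ∈ Q.A i) : i = Q.idxA x := by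
  by_contra hne
  exact Set.disjoint_left.mp (Q.disjA hne) h (Q.idxA_mem x)

lemma eq_of_small {Z : Type*} [MetricSpace Z] {t : ℕ → Set Z}
    (hd : ∀ n, Metric.diam (t n) ≤ (1/2)^(n+1)) (hb : ∀ n, Bornology.IsBounded (t n))
    {y z : Z} (hy : ∀ n, y ∈ t n) (hz : ∀ n, z ∈ t n) : y = z := by
  by_contra h
  have hpos : 0 < dist y z := dist_pos.mpr h
  obtain ⟨n, hn⟩ := exists_pow_lt_of_lt_one hpos (by norm_num : (1/2:ℝ) < 1)
  have h1 : dist y z ≤ Metric.diam (t n) := Metric.dist_le_diam_of_mem (hb n) (hy n) (hz n)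
  have h2 : ((1:ℝ)/2)^(n+1) ≤ (1/2)^n :=
    pow_le_pow_of_le_one (by norm_num) (by norm_num) n.le_succ
  linarith [hd n]

section Limit

variable (S : ℕ → KRP f)

def chainA (x : X) (n : ℕ) : Set X := (S (n+1)).A ((S (n+1)).idxA x)

def chainB (x : X) (n : ℕ) : Set Y := (S (n+1)).B ((S (n+1)).idxA x)

variable {S}

lemma chain_anti (href : ∀ n, (S (n+1)).Refines (S n)) (x : X) (n : ℕ) :
    chainA S x (n+1) ⊆ chainA S x n ∧ chainB S x (n+1) ⊆ chainB S x n := by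
  obtain ⟨r, hr⟩ := href (n+1)
  have hx : x ∈ (S (n+2)).A ((S (n+2)).idxA x) := (S (n+2)).idxA_mem x
  have h1 : x ∈ (S (n+1)).A (r ((S (n+2)).idxA x)) := (hr _).1 hx
  have heq : r ((S (n+2)).idxA x) = (S (n+1)).idxA x := (S (n+1)).idxA_eq h1
  constructor
  · rw [chainA, chainA, ← heq]
    exact (hr _).1
  · rw [chainB, chainB, ← heq]
    exact (hr _).2

lemma chainB_inter_nonempty (href : ∀ n, (S (n+1)).Refines (S n)) (x : X) :
    (⋂ n, chainB S x n).Nonempty :=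
  IsCompact.nonempty_iInter_of_sequence_nonempty_isCompact_isClosed _
    (fun n => (chain_anti href x n).2) (fun n => (S (n+1)).neB _)
    ((S 1).clopenB _).1.isCompact (fun n => ((S (n+1)).clopenB _).1)

noncomputable def limF (h : ∀ x, (⋂ n, chainB S x n).Nonempty) : X → Y :=
  fun x => (h x).some

lemma limF_mem (h : ∀ x, (⋂ n, chainB S x n).Nonempty) (x : X) (n : ℕ) :
    limF h x ∈ chainB S x n :=
  Set.mem_iInter.mp (h x).some_mem n

end Limit

lemma kr_main [Nonempty X] [Nonempty Y] (hP : IsClosed P) (hK : IsClosed K)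
    (hPnd : IsNowhereDense P) (hKnd : IsNowhereDense K) (f : P ≃ₜ K) :
    ∃ F : X ≃ₜ Y, ∀ p : P, F (p : X) = ((f p : K) : Y) := by
  set S : ℕ → KRP f := krpSeq f hP hK hPnd hKnd with hS
  have href : ∀ n, (S (n+1)).Refines (S n) := krpSeq_refines hP hK hPnd hKnd
  have hsm : ∀ n, (S (n+1)).Small ((1/2)^(n+1)) := krpSeq_small hP hK hPnd hKnd
  set S' : ℕ → KRP f.symm := fun n => (S n).symm with hS'
  have href' : ∀ n, (S' (n+1)).Refines (S' n) := fun n => (href n).symm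
  have hsm' : ∀ n, (S' (n+1)).Small ((1/2)^(n+1)) := fun n => (hsm n).symm
  have hne : ∀ x, (⋂ n, chainB S x n).Nonempty := chainB_inter_nonempty href
  have hne' : ∀ y, (⋂ n, chainB S' y n).Nonempty := chainB_inter_nonempty href'
  set F : X → Y := limF hne with hF
  set G : Y → X := limF hne' with hG
  -- diameters and boundedness of chains
  have hdA : ∀ (x : X) (n : ℕ), Metric.diam (chainA S x n) ≤ (1/2)^(n+1) :=
    fun x n => (hsm n _).1
  have hdB : ∀ (x : X) (n : ℕ), Metric.diam (chainB S x n) ≤ (1/2)^(n+1) :=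
    fun x n => (hsm n _).2
  have hbA : ∀ (x : X) (n : ℕ), Bornology.IsBounded (chainA S x n) :=
    fun x n => ((S (n+1)).clopenA _).1.isCompact.isBounded
  have hbB : ∀ (x : X) (n : ℕ), Bornology.IsBounded (chainB S x n) :=
    fun x n => ((S (n+1)).clopenB _).1.isCompact.isBounded
  -- index compatibility
  have hidx : ∀ (x : X) (n : ℕ), (S' (n+1)).idxA (F x) = (S (n+1)).idxA x := by
    intro x n
    exact ((S' (n+1)).idxA_eq (limF_mem hne x n)).symm
  have hidx' : ∀ (y : Y) (n : ℕ), (S (n+1)).idxA (G y) = (S' (n+1)).idxA y := by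
    intro y n
    exact ((S (n+1)).idxA_eq (limF_mem hne' y n)).symm
  -- G ∘ F = id
  have hGF : ∀ x, G (F x) = x := by
    intro x
    refine eq_of_small (t := chainA S x) (hdA x) (hbA x) ?_ (fun n => (S (n+1)).idxA_mem x)
    intro n
    have h1 : G (F x) ∈ chainB S' (F x) n := limF_mem hne' (F x) n
    rw [chainB] at h1
    rw [hidx x n] at h1
    exact h1
  have hFG : ∀ y, F (G y) = y := by
    intro y
    have hdB' : ∀ n, Metric.diam (chainA S' y n) ≤ (1/2)^(n+1) := fun n => (hsm' n _).1
    have hbB' : ∀ n, Bornology.IsBounded (chainA S' y n) :=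
      fun n => ((S' (n+1)).clopenA _).1.isCompact.isBounded
    refine eq_of_small (t := chainA S' y) hdB' hbB' ?_ (fun n => (S' (n+1)).idxA_mem y)
    intro n
    have h1 : F (G y) ∈ chainB S (G y) n := limF_mem hne (G y) n
    rw [chainB] at h1
    rw [hidx' y n] at h1
    exact h1
  -- F extends f
  have hext : ∀ p : P, F (p : X) = ((f p : K) : Y) := by
    intro p
    refine eq_of_small (t := chainB S (p : X)) (hdB _) (hbB _)
      (fun n => limF_mem hne _ n) ?_
    intro n
    exact ((S (n+1)).matched _ p).mp ((S (n+1)).idxA_mem (p : X))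
  -- continuity
  have hcont : Continuous F := by
    rw [continuous_iff_continuousAt]
    intro x
    rw [ContinuousAt, Metric.tendsto_nhds]
    intro ε hε
    obtain ⟨n, hn⟩ := exists_pow_lt_of_lt_one hε (by norm_num : (1/2:ℝ) < 1)
    filter_upwards [((S (n+1)).clopenA ((S (n+1)).idxA x)).2.mem_nhds
      ((S (n+1)).idxA_mem x)] with z hz
    have hzidx : (S (n+1)).idxA z = (S (n+1)).idxA x := ((S (n+1)).idxA_eq hz).symm
    have h1 : F z ∈ chainB S x n := by
      have := limF_mem hne z n
      rw [chainB] at this ⊢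
      rwa [hzidx] at this
    have h2 : F x ∈ chainB S x n := limF_mem hne x n
    have h3 : dist (F z) (F x) ≤ Metric.diam (chainB S x n) :=
      Metric.dist_le_diam_of_mem (hbB x n) h1 h2
    have h4 : ((1:ℝ)/2)^(n+1) ≤ (1/2)^n :=
      pow_le_pow_of_le_one (by norm_num) (by norm_num) n.le_succ
    have := hdB x n
    linarith
  set e : X ≃ Y := ⟨F, G, hGF, hFG⟩ with he
  exact ⟨Continuous.homeoOfEquivCompactToT2 (f := e) hcont, hext⟩

end Main

theorem knaster_reichbach
    (X Y : Type*) [TopologicalSpace X] [TopologicalSpace Y]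
    [CompactSpace X] [CompactSpace Y]
    [TopologicalSpace.MetrizableSpace X] [TopologicalSpace.MetrizableSpace Y]
    [PerfectSpace X] [PerfectSpace Y]
    [TotallyDisconnectedSpace X] [TotallyDisconnectedSpace Y]
    [Nonempty X] [Nonempty Y]
    (P : Set X) (K : Set Y) (hP : IsClosed P) (hK : IsClosed K)
    (hPnd : IsNowhereDense P) (hKnd : IsNowhereDense K)
    (f : P ≃ₜ K) :
    ∃ F : X ≃ₜ Y, ∀ p : P, F (p : X) = (f p : Y) := by
  letI : MetricSpace X := TopologicalSpace.metrizableSpaceMetric X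
  letI : MetricSpace Y := TopologicalSpace.metrizableSpaceMetric Y
  exact kr_main hP hK hPnd hKnd f
end

section
/- Let X = ∏_{α ∈ A} X_α be a product of compact metrizable spaces indexed by an arbitrary set A, let P, K ⊆ X be closed subsets, and let f : P → K be a homeomorphism. Then for any countable subset C ⊆ A there exists a countable subset B ⊆ A with C ⊆ B and a homeomorphism f_B : π_B(P) → π_B(K) such that π_B ∘ f = f_B ∘ π_B on P, where π_B : X → ∏_{α ∈ B} X_α is the canonical projection. -/
open TopologicalSpace Topology

lemma dep_countable {A : Type*} {X : A → Type*} [∀ a, TopologicalSpace (X a)]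
    [∀ a, CompactSpace (X a)] [∀ a, T2Space (X a)]
    {P : Set (∀ a, X a)} (hP : IsClosed P)
    {Y : Type*} [TopologicalSpace Y] [MetrizableSpace Y]
    (g : P → Y) (hg : Continuous g) :
    ∃ D : Set A, D.Countable ∧
      ∀ x y : P, (∀ a ∈ D, (x : ∀ a, X a) a = (y : ∀ a, X a) a) → g x = g y := by
  letI : MetricSpace Y := TopologicalSpace.metrizableSpaceMetric Y
  haveI : CompactSpace P := isCompact_iff_compactSpace.mp hP.isCompact
  set F : ℕ → Set (P × P) := fun n => {z | 1 / (n + 1 : ℝ) ≤ dist (g z.1) (g z.2)} with hF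
  have hFclosed : ∀ n, IsClosed (F n) := fun n =>
    isClosed_le continuous_const ((hg.comp continuous_fst).dist (hg.comp continuous_snd))
  have key : ∀ n, ∃ s : Set A, s.Finite ∧
      ∀ z ∈ F n, ∃ a ∈ s, (z.1 : ∀ a, X a) a ≠ (z.2 : ∀ a, X a) a := by
    intro n
    have hcpt : IsCompact (F n) := (hFclosed n).isCompact
    have hsep : ∀ z : F n, ∃ (a : A) (U V : Set (X a)), IsOpen U ∧ IsOpen V ∧
        (z.1.1 : ∀ a, X a) a ∈ U ∧ (z.1.2 : ∀ a, X a) a ∈ V ∧ Disjoint U V := by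
      rintro ⟨⟨x, y⟩, hz⟩
      have hgne : g x ≠ g y := by
        intro h
        have : dist (g x) (g y) = 0 := by rw [h, dist_self]
        have h2 : (0 : ℝ) < 1 / (n + 1 : ℝ) := by positivity
        simp only [hF, Set.mem_setOf_eq] at hz
        linarith
      have hxy : (x : ∀ a, X a) ≠ (y : ∀ a, X a) := by
        intro h; exact hgne (congrArg g (Subtype.ext h))
      obtain ⟨a, ha⟩ := Function.ne_iff.mp hxy
      obtain ⟨U, V, hU, hV, hxU, hyV, hUV⟩ := t2_separation ha
      exact ⟨a, U, V, hU, hV, hxU, hyV, hUV⟩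
    choose av Uv Vv hUo hVo hxU hyV hUV using hsep
    set W : F n → Set (P × P) := fun z =>
      {w | (w.1 : ∀ a, X a) (av z) ∈ Uv z ∧ (w.2 : ∀ a, X a) (av z) ∈ Vv z} with hW
    have hWopen : ∀ z, IsOpen (W z) := by
      intro z
      exact (((continuous_apply (av z)).comp
          (continuous_subtype_val.comp continuous_fst)).isOpen_preimage _ (hUo z)).inter
        (((continuous_apply (av z)).comp
          (continuous_subtype_val.comp continuous_snd)).isOpen_preimage _ (hVo z))
    have hcover : F n ⊆ ⋃ z : F n, W z := fun w hw =>
      Set.mem_iUnion.mpr ⟨⟨w, hw⟩, hxU _, hyV _⟩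
    obtain ⟨t, ht⟩ := hcpt.elim_finite_subcover W hWopen hcover
    refine ⟨av '' ↑t, (t.finite_toSet.image _), ?_⟩
    intro z hz
    obtain ⟨i, hit, hiW⟩ := Set.mem_iUnion₂.mp (ht hz)
    refine ⟨av i, ⟨i, hit, rfl⟩, ?_⟩
    intro heq
    exact (hUV i).ne_of_mem hiW.1 hiW.2 (by rw [heq])
  choose s hsfin hs using key
  refine ⟨⋃ n, s n, Set.countable_iUnion fun n => (hsfin n).countable, ?_⟩
  intro x y hxy
  by_contra hne
  obtain ⟨n, hn⟩ := exists_nat_one_div_lt (dist_pos.mpr hne)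
  obtain ⟨a, ha, hane⟩ := hs n (x, y) hn.le
  exact hane (hxy a (Set.mem_iUnion.mpr ⟨n, ha⟩))

theorem homeomorphism_factors_through_countably_many_coordinates
    {A : Type*} {X : A → Type*} [∀ a, TopologicalSpace (X a)]
    [∀ a, CompactSpace (X a)] [∀ a, TopologicalSpace.MetrizableSpace (X a)]
    (P K : Set (∀ a, X a)) (hP : IsClosed P) (hK : IsClosed K)
    (f : P ≃ₜ K) (C : Set A) (hC : C.Countable) :
    ∃ B : Set A, C ⊆ B ∧ B.Countable ∧
      ∃ fB : ((fun (x : ∀ a, X a) (b : B) => x b) '' P) ≃ₜ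
             ((fun (x : ∀ a, X a) (b : B) => x b) '' K),
        ∀ p : P,
          ((fB ⟨fun b : B => (p : ∀ a, X a) b, Set.mem_image_of_mem _ p.2⟩ :
              ((fun (x : ∀ a, X a) (b : B) => x b) '' K)) : ∀ b : B, X b) =
            fun b : B => (f p : ∀ a, X a) b := by
  classical
  have hD1 : ∀ a : A, ∃ D : Set A, D.Countable ∧
      ∀ x y : P, (∀ a' ∈ D, (x : ∀ a, X a) a' = (y : ∀ a, X a) a') →
        (f x : ∀ a, X a) a = (f y : ∀ a, X a) a :=
    fun a => dep_countable hP (fun p => (f p : ∀ a, X a) a)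
      ((continuous_apply a).comp (continuous_subtype_val.comp f.continuous))
  have hD2 : ∀ a : A, ∃ D : Set A, D.Countable ∧
      ∀ x y : K, (∀ a' ∈ D, (x : ∀ a, X a) a' = (y : ∀ a, X a) a') →
        (f.symm x : ∀ a, X a) a = (f.symm y : ∀ a, X a) a :=
    fun a => dep_countable hK (fun k => (f.symm k : ∀ a, X a) a)
      ((continuous_apply a).comp (continuous_subtype_val.comp f.symm.continuous))
  choose D1 hD1c hD1 using hD1
  choose D2 hD2c hD2 using hD2
  set Bs : ℕ → Set A := fun n => Nat.rec C (fun _ Bn => Bn ∪ ⋃ a ∈ Bn, (D1 a ∪ D2 a)) n with hBs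
  have hBsucc : ∀ n, Bs (n + 1) = Bs n ∪ ⋃ a ∈ Bs n, (D1 a ∪ D2 a) := fun n => rfl
  have hBc : ∀ n, (Bs n).Countable := by
    intro n
    induction n with
    | zero => exact hC
    | succ n ih => exact ih.union (ih.biUnion fun a _ => (hD1c a).union (hD2c a))
  refine ⟨⋃ n, Bs n, ?_, Set.countable_iUnion hBc, ?_⟩
  · exact Set.subset_iUnion Bs 0
  set B : Set A := ⋃ n, Bs n with hBdef
  have hBn : ∀ n, Bs n ⊆ B := fun n => Set.subset_iUnion Bs n
  have hDB : ∀ a ∈ B, D1 a ∪ D2 a ⊆ B := by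
    intro a ha
    obtain ⟨n, hn⟩ := Set.mem_iUnion.mp ha
    refine subset_trans ?_ (hBn (n + 1))
    rw [hBsucc]
    exact Set.subset_union_of_subset_right
      (Set.subset_biUnion_of_mem (u := fun a => D1 a ∪ D2 a) hn) _
  have keyf : ∀ x y : P, (∀ b ∈ B, (x : ∀ a, X a) b = (y : ∀ a, X a) b) →
      ∀ b ∈ B, (f x : ∀ a, X a) b = (f y : ∀ a, X a) b := by
    intro x y hxy b hb
    exact hD1 b x y fun a' ha' => hxy a' (hDB b hb (Set.mem_union_left _ ha'))
  have keyg : ∀ x y : K, (∀ b ∈ B, (x : ∀ a, X a) b = (y : ∀ a, X a) b) →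
      ∀ b ∈ B, (f.symm x : ∀ a, X a) b = (f.symm y : ∀ a, X a) b := by
    intro x y hxy b hb
    exact hD2 b x y fun a' ha' => hxy a' (hDB b hb (Set.mem_union_right _ ha'))
  set π : (∀ a, X a) → ∀ b : B, X b := fun x b => x b with hπ
  have hπc : Continuous π := continuous_pi fun b => continuous_apply _
  haveI : CompactSpace P := isCompact_iff_compactSpace.mp hP.isCompact
  haveI : CompactSpace K := isCompact_iff_compactSpace.mp hK.isCompact
  haveI : CompactSpace ↥(π '' P) :=
    isCompact_iff_compactSpace.mp (hP.isCompact.image hπc)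
  haveI : CompactSpace ↥(π '' K) :=
    isCompact_iff_compactSpace.mp (hK.isCompact.image hπc)
  set φ0 : P → ↥(π '' K) := fun p => ⟨π (f p : ∀ a, X a), Set.mem_image_of_mem π (f p).2⟩
    with hφ0
  set ψ0 : K → ↥(π '' P) := fun k => ⟨π (f.symm k : ∀ a, X a),
    Set.mem_image_of_mem π (f.symm k).2⟩ with hψ0
  have hφ0c : Continuous φ0 :=
    Continuous.subtype_mk (hπc.comp (continuous_subtype_val.comp f.continuous)) _
  have hψ0c : Continuous ψ0 :=
    Continuous.subtype_mk (hπc.comp (continuous_subtype_val.comp f.symm.continuous)) _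
  have hφ0eq : ∀ p q : P, π (p : ∀ a, X a) = π (q : ∀ a, X a) → φ0 p = φ0 q := by
    intro p q h
    refine Subtype.ext (funext fun b => ?_)
    exact keyf p q (fun b hb => congrFun h ⟨b, hb⟩) b b.2
  have hψ0eq : ∀ p q : K, π (p : ∀ a, X a) = π (q : ∀ a, X a) → ψ0 p = ψ0 q := by
    intro p q h
    refine Subtype.ext (funext fun b => ?_)
    exact keyg p q (fun b hb => congrFun h ⟨b, hb⟩) b b.2
  set πP : P → ↥(π '' P) := fun p => ⟨π (p : ∀ a, X a), Set.mem_image_of_mem π p.2⟩ with hπP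
  set πK : K → ↥(π '' K) := fun k => ⟨π (k : ∀ a, X a), Set.mem_image_of_mem π k.2⟩ with hπK
  have hπPc : Continuous πP := Continuous.subtype_mk (hπc.comp continuous_subtype_val) _
  have hπKc : Continuous πK := Continuous.subtype_mk (hπc.comp continuous_subtype_val) _
  have hπPs : Function.Surjective πP := by
    rintro ⟨y, x, hx, rfl⟩; exact ⟨⟨x, hx⟩, rfl⟩
  have hπKs : Function.Surjective πK := by
    rintro ⟨y, x, hx, rfl⟩; exact ⟨⟨x, hx⟩, rfl⟩
  have hqP : IsQuotientMap πP := hπPc.isClosedMap.isQuotientMap hπPc hπPs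
  have hqK : IsQuotientMap πK := hπKc.isClosedMap.isQuotientMap hπKc hπKs
  set φ : ↥(π '' P) → ↥(π '' K) := fun y => φ0 ⟨y.2.choose, y.2.choose_spec.1⟩ with hφ
  set ψ : ↥(π '' K) → ↥(π '' P) := fun y => ψ0 ⟨y.2.choose, y.2.choose_spec.1⟩ with hψ
  have φspec : ∀ p : P, φ (πP p) = φ0 p := fun p =>
    hφ0eq _ p (πP p).2.choose_spec.2
  have ψspec : ∀ k : K, ψ (πK k) = ψ0 k := fun k =>
    hψ0eq _ k (πK k).2.choose_spec.2
  have linv : Function.LeftInverse ψ φ := by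
    rintro ⟨y, x, hx, rfl⟩
    have h1 : φ ⟨π x, ⟨x, hx, rfl⟩⟩ = φ0 ⟨x, hx⟩ := φspec ⟨x, hx⟩
    rw [h1]
    have h2 : ψ (φ0 ⟨x, hx⟩) = ψ0 (f ⟨x, hx⟩) := ψspec (f ⟨x, hx⟩)
    rw [h2]
    apply Subtype.ext
    show π (f.symm (f ⟨x, hx⟩) : ∀ a, X a) = π x
    rw [f.symm_apply_apply]
  have rinv : Function.RightInverse ψ φ := by
    rintro ⟨y, x, hx, rfl⟩
    have h1 : ψ ⟨π x, ⟨x, hx, rfl⟩⟩ = ψ0 ⟨x, hx⟩ := ψspec ⟨x, hx⟩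
    rw [h1]
    have h2 : φ (ψ0 ⟨x, hx⟩) = φ0 (f.symm ⟨x, hx⟩) := φspec (f.symm ⟨x, hx⟩)
    rw [h2]
    apply Subtype.ext
    show π (f (f.symm ⟨x, hx⟩) : ∀ a, X a) = π x
    rw [f.apply_symm_apply]
  have hφcont : Continuous φ := by
    rw [hqP.continuous_iff]
    rw [show φ ∘ πP = φ0 from funext φspec]
    exact hφ0c
  set e : ↥(π '' P) ≃ ↥(π '' K) := ⟨φ, ψ, linv, rinv⟩ with he
  refine ⟨Continuous.homeoOfEquivCompactToT2 (f := e) hφcont, ?_⟩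
  intro p
  exact congrArg Subtype.val (φspec p)
end

section
/- Let X = ∏_{α ∈ A} X_α be a product of compact metrizable spaces, P, K ⊆ X closed subsets, and f : P → K a homeomorphism. Call a subset B ⊆ A f-admissible if there exists a homeomorphism f_B : π_B(P) → π_B(K) with π_B ∘ f = f_B ∘ π_B. Then an arbitrary union of f-admissible subsets of A is f-admissible. -/
theorem union_of_admissible_is_admissible
    {A : Type*} {X : A → Type*} [∀ a, TopologicalSpace (X a)]
    [∀ a, CompactSpace (X a)] [∀ a, TopologicalSpace.MetrizableSpace (X a)]
    (P K : Set (∀ a, X a)) (hP : IsClosed P) (hK : IsClosed K)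
    (f : P ≃ₜ K)
    (Adm : Set A → Prop)
    (hAdm : ∀ B : Set A, Adm B ↔
      ∃ fB : ((fun (x : ∀ a, X a) (b : B) => x b) '' P) ≃ₜ
             ((fun (x : ∀ a, X a) (b : B) => x b) '' K),
        ∀ p : P,
          ((fB ⟨fun b : B => (p : ∀ a, X a) b, Set.mem_image_of_mem _ p.2⟩ :
              ((fun (x : ∀ a, X a) (b : B) => x b) '' K)) : ∀ b : B, X b) =
            fun b : B => (f p : ∀ a, X a) b)
    {ι : Type*} (Bs : ι → Set A) (h : ∀ i, Adm (Bs i)) :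
    Adm (⋃ i, Bs i) := by
  classical
  rw [hAdm]
  set U : Set A := ⋃ i, Bs i with hU
  -- projections agreeing on U
  -- key lemma: f respects πU-fibers
  have key : ∀ p q : P,
      (fun b : U => (p : ∀ a, X a) b) = (fun b : U => (q : ∀ a, X a) b) →
      (fun b : U => (f p : ∀ a, X a) b) = (fun b : U => (f q : ∀ a, X a) b) := by
    intro p q hpq
    funext b
    obtain ⟨a, ha⟩ := b
    obtain ⟨i, hai⟩ := Set.mem_iUnion.mp ha
    obtain ⟨fB, hfB⟩ := (hAdm (Bs i)).mp (h i)
    have hpqi : (fun c : Bs i => (p : ∀ a, X a) c) = fun c : Bs i => (q : ∀ a, X a) c := by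
      funext c
      exact congrFun hpq ⟨c, Set.mem_iUnion.mpr ⟨i, c.2⟩⟩
    have heq : fB ⟨fun c : Bs i => (p : ∀ a, X a) c, Set.mem_image_of_mem _ p.2⟩
        = fB ⟨fun c : Bs i => (q : ∀ a, X a) c, Set.mem_image_of_mem _ q.2⟩ := by
      congr 1
      exact Subtype.ext hpqi
    have := congrArg Subtype.val heq
    rw [hfB p, hfB q] at this
    exact congrFun this ⟨a, hai⟩
  have keyinv : ∀ p q : P,
      (fun b : U => (f p : ∀ a, X a) b) = (fun b : U => (f q : ∀ a, X a) b) →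
      (fun b : U => (p : ∀ a, X a) b) = (fun b : U => (q : ∀ a, X a) b) := by
    intro p q hpq
    funext b
    obtain ⟨a, ha⟩ := b
    obtain ⟨i, hai⟩ := Set.mem_iUnion.mp ha
    obtain ⟨fB, hfB⟩ := (hAdm (Bs i)).mp (h i)
    have hpqi : (fun c : Bs i => (f p : ∀ a, X a) c) = fun c : Bs i => (f q : ∀ a, X a) c := by
      funext c
      exact congrFun hpq ⟨c, Set.mem_iUnion.mpr ⟨i, c.2⟩⟩
    have heq : fB ⟨fun c : Bs i => (p : ∀ a, X a) c, Set.mem_image_of_mem _ p.2⟩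
        = fB ⟨fun c : Bs i => (q : ∀ a, X a) c, Set.mem_image_of_mem _ q.2⟩ := by
      apply Subtype.ext
      rw [hfB p, hfB q]
      exact hpqi
    have := congrArg Subtype.val (fB.injective heq)
    exact congrFun this ⟨a, hai⟩
  set PU := (fun (x : ∀ a, X a) (b : U) => x b) '' P with hPU
  set KU := (fun (x : ∀ a, X a) (b : U) => x b) '' K with hKU
  have exP : ∀ y : PU, ∃ p : P, (fun b : U => (p : ∀ a, X a) b) = (y : ∀ b : U, X b) := by
    rintro ⟨y, x, hx, rfl⟩
    exact ⟨⟨x, hx⟩, rfl⟩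
  have exK : ∀ y : KU, ∃ k : K, (fun b : U => (k : ∀ a, X a) b) = (y : ∀ b : U, X b) := by
    rintro ⟨y, x, hx, rfl⟩
    exact ⟨⟨x, hx⟩, rfl⟩
  let F : PU → KU := fun y =>
    ⟨fun b : U => (f (exP y).choose : ∀ a, X a) b,
      Set.mem_image_of_mem _ (f (exP y).choose).2⟩
  let G : KU → PU := fun y =>
    ⟨fun b : U => (f.symm (exK y).choose : ∀ a, X a) b,
      Set.mem_image_of_mem _ (f.symm (exK y).choose).2⟩
  have F_spec : ∀ p : P,
      F ⟨fun b : U => (p : ∀ a, X a) b, Set.mem_image_of_mem _ p.2⟩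
        = ⟨fun b : U => (f p : ∀ a, X a) b, Set.mem_image_of_mem _ (f p).2⟩ := by
    intro p
    apply Subtype.ext
    exact key _ p (exP _).choose_spec
  have G_spec : ∀ k : K,
      G ⟨fun b : U => (k : ∀ a, X a) b, Set.mem_image_of_mem _ k.2⟩
        = ⟨fun b : U => (f.symm k : ∀ a, X a) b, Set.mem_image_of_mem _ (f.symm k).2⟩ := by
    intro k
    apply Subtype.ext
    apply keyinv (f.symm (exK ⟨fun b : U => (k : ∀ a, X a) b,
        Set.mem_image_of_mem _ k.2⟩).choose) (f.symm k)
    simp only [Homeomorph.apply_symm_apply]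
    exact (exK ⟨fun b : U => (k : ∀ a, X a) b, Set.mem_image_of_mem _ k.2⟩).choose_spec
  have GF : ∀ y : PU, G (F y) = y := by
    intro y
    obtain ⟨p, hp⟩ := exP y
    have hy : y = ⟨fun b : U => (p : ∀ a, X a) b, Set.mem_image_of_mem _ p.2⟩ :=
      (Subtype.ext hp).symm
    rw [hy, F_spec p, G_spec (f p)]
    exact Subtype.ext (by simp)
  have FG : ∀ y : KU, F (G y) = y := by
    intro y
    obtain ⟨k, hk⟩ := exK y
    have hy : y = ⟨fun b : U => (k : ∀ a, X a) b, Set.mem_image_of_mem _ k.2⟩ :=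
      (Subtype.ext hk).symm
    rw [hy, G_spec k, F_spec (f.symm k)]
    exact Subtype.ext (by simp)
  let E : PU ≃ KU := ⟨F, G, GF, FG⟩
  haveI : CompactSpace P := isCompact_iff_compactSpace.mp hP.isCompact
  have hcont_q : Continuous fun p : P =>
      (⟨fun b : U => (p : ∀ a, X a) b, Set.mem_image_of_mem _ p.2⟩ : PU) := by
    apply Continuous.subtype_mk
    exact continuous_pi fun b => (continuous_apply (b : A)).comp continuous_subtype_val
  have hsurj : Function.Surjective fun p : P =>
      (⟨fun b : U => (p : ∀ a, X a) b, Set.mem_image_of_mem _ p.2⟩ : PU) := by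
    intro y
    obtain ⟨p, hp⟩ := exP y
    exact ⟨p, Subtype.ext hp⟩
  have hqm : Topology.IsQuotientMap fun p : P =>
      (⟨fun b : U => (p : ∀ a, X a) b, Set.mem_image_of_mem _ p.2⟩ : PU) :=
    (hcont_q.isClosedMap).isQuotientMap hcont_q hsurj
  have hFcont : Continuous (E : PU → KU) := by
    rw [hqm.continuous_iff]
    have : (E : PU → KU) ∘ (fun p : P =>
        (⟨fun b : U => (p : ∀ a, X a) b, Set.mem_image_of_mem _ p.2⟩ : PU))
        = fun p : P => (⟨fun b : U => (f p : ∀ a, X a) b,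
            Set.mem_image_of_mem _ (f p).2⟩ : KU) := by
      funext p
      exact F_spec p
    rw [this]
    apply Continuous.subtype_mk
    exact continuous_pi fun b =>
      ((continuous_apply (b : A)).comp continuous_subtype_val).comp f.continuous
  haveI : CompactSpace PU :=
    isCompact_iff_compactSpace.mp (hP.isCompact.image (by fun_prop))
  let fB : PU ≃ₜ KU := Continuous.homeoOfEquivCompactToT2 (f := E) hFcont
  refine ⟨fB, fun p => ?_⟩
  have := F_spec p
  exact congrArg Subtype.val this
end

section
/- Every continuous map f : ∏_{α ∈ A} X_α → M from a product of compact metrizable spaces into a metrizable space M factors through countably many coordinates: there is a countable B ⊆ A and a continuous g : ∏_{α ∈ B} X_α → M with f = g ∘ π_B. -/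
open Filter Set Uniformity

theorem mibu_countable_coordinates
    {A : Type*} {X : A → Type*} [∀ a, TopologicalSpace (X a)]
    [∀ a, CompactSpace (X a)] [∀ a, TopologicalSpace.MetrizableSpace (X a)]
    {M : Type*} [TopologicalSpace M] [TopologicalSpace.MetrizableSpace M]
    (f : C(∀ a, X a, M)) :
    ∃ B : Set A, B.Countable ∧
      ∃ g : C(∀ b : B, X b, M), ∀ x : ∀ a, X a, f x = g (fun b : B => x b) := by
  classical
  by_cases hne : ∀ a, Nonempty (X a)
  swap
  · -- some coordinate is empty, everything is vacuous
    push_neg at hne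
    obtain ⟨a, ha⟩ := hne
    haveI hE : IsEmpty (X a) := ha
    haveI hE2 : IsEmpty (∀ b : ({a} : Set A), X b) := ⟨fun y => hE.false (y ⟨a, rfl⟩)⟩
    refine ⟨{a}, Set.countable_singleton a, ⟨isEmptyElim, ?_⟩, fun x => (hE.false (x a)).elim⟩
    rw [continuous_iff_continuousAt]
    exact fun y => isEmptyElim y
  · letI : ∀ a, MetricSpace (X a) := fun a => TopologicalSpace.metrizableSpaceMetric (X a)
    letI : MetricSpace M := TopologicalSpace.metrizableSpaceMetric M
    have huc : UniformContinuous f := CompactSpace.uniformContinuous_of_continuous f.continuous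
    -- for each n get a finite set of coordinates controlling f up to 1/(n+1)
    have key : ∀ n : ℕ, ∃ I : Set A, I.Finite ∧
        ∀ x y : ∀ a, X a, (∀ a ∈ I, x a = y a) →
          dist (f x) (f y) < 1 / (n + 1) := by
      intro n
      have hpos : (0 : ℝ) < 1 / (n + 1) := by positivity
      have hU : {p : (∀ a, X a) × (∀ a, X a) | dist (f p.1) (f p.2) < 1 / (n + 1)}
          ∈ 𝓤 (∀ a, X a) := huc (Metric.dist_mem_uniformity hpos)
      rw [Pi.uniformity, Filter.mem_iInf'] at hU
      obtain ⟨I, hIfin, V, hV, hVuniv, -, hUeq⟩ := hU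
      refine ⟨I, hIfin, fun x y hxy => ?_⟩
      have : (x, y) ∈ ⋂ i, V i := by
        refine Set.mem_iInter.2 fun i => ?_
        obtain ⟨t, ht, hts⟩ := (Filter.mem_comap).1 (hV i)
        by_cases hi : i ∈ I
        · have : ((x, y).1 i, (x, y).2 i) ∈ t := by
            have := hxy i hi
            simpa [this] using refl_mem_uniformity ht
          exact hts this
        · simp [hVuniv i hi]
      rw [← hUeq] at this
      exact this
    choose I hIfin hI using key
    refine ⟨⋃ n, I n, Set.countable_iUnion fun n => (hIfin n).countable, ?_⟩
    set B : Set A := ⋃ n, I n with hB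
    have hagree : ∀ x y : ∀ a, X a, (∀ a ∈ B, x a = y a) → f x = f y := by
      intro x y hxy
      by_contra h
      have hd : 0 < dist (f x) (f y) := dist_pos.2 h
      obtain ⟨n, hn⟩ := exists_nat_one_div_lt hd
      exact absurd (hI n x y fun a ha => hxy a (Set.mem_iUnion.2 ⟨n, ha⟩)) (not_lt.2 hn.le)
    -- build the extension map
    have hznon : ∀ a, Nonempty (X a) := hne
    let z : ∀ a, X a := fun a => (hznon a).some
    let ext : (∀ b : B, X b) → ∀ a, X a := fun y a =>
      if h : a ∈ B then y ⟨a, h⟩ else z a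
    have hext : Continuous ext := by
      refine continuous_pi fun a => ?_
      by_cases h : a ∈ B
      · simp only [ext, dif_pos h]
        exact continuous_apply _
      · simp only [ext, dif_neg h]
        exact continuous_const
    refine ⟨f.comp ⟨ext, hext⟩, fun x => ?_⟩
    simp only [ContinuousMap.comp_apply, ContinuousMap.coe_mk]
    refine hagree x (ext fun b : B => x b) fun a ha => ?_
    simp [ext, dif_pos ha]
end

section
/- Let X be a zero-dimensional compact metrizable space, P ⊆ X closed, and g : P → H(C) a continuous map into the homeomorphism group of the Cantor set C (compact-open topology). Then g extends to a continuous map ĝ : X → H(C). -/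
/-- The Cantor set. -/
abbrev Cantor : Type := ℕ → Bool

/-- The homeomorphism group of `X`, as a subspace of `C(X, X)` with the
compact-open topology. -/
def HomeoGroup' (X : Type*) [TopologicalSpace X] : Type _ :=
  {f : C(X, X) // ∃ e : X ≃ₜ X, (e : X → X) = f}

instance (X : Type*) [TopologicalSpace X] : TopologicalSpace (HomeoGroup' X) :=
  inferInstanceAs (TopologicalSpace {f : C(X, X) // ∃ e : X ≃ₜ X, (e : X → X) = f})


open TopologicalSpace Set Topology

/-- Every nonempty closed subset of a zero-dimensional compact metrizable space is a retract. -/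
theorem exists_retraction_aux
    (X : Type*) [TopologicalSpace X] [CompactSpace X]
    [TopologicalSpace.MetrizableSpace X] [TotallyDisconnectedSpace X]
    (P : Set X) (hP : IsClosed P) (hne : P.Nonempty) :
    ∃ r : C(X, P), ∀ p : P, r (p : X) = p := by
  haveI : SecondCountableTopology X := by
    letI := TopologicalSpace.metrizableSpaceMetric X
    infer_instance
  haveI : TotallySeparatedSpace X := loc_compact_t2_tot_disc_iff_tot_sep.mp inferInstance
  haveI : Countable (Clopens X) := Clopens.countable_iff_secondCountable.mpr inferInstance
  obtain ⟨u, hu⟩ := exists_surjective_nat (Clopens X)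
  set e : X → Cantor := fun x n => (u n : Set X).boolIndicator x with he_def
  have he_cont : Continuous e :=
    continuous_pi fun n => (continuous_boolIndicator_iff_isClopen _).mpr (u n).2
  have he_inj : Function.Injective e := by
    intro x y hxy
    by_contra hne'
    obtain ⟨U, hU, hxU, hyU⟩ := exists_isClopen_of_totally_separated hne'
    obtain ⟨n, hn⟩ := hu ⟨U, hU⟩
    have := congrFun hxy n
    simp only [he_def, hn] at this
    rw [Set.mem_iff_boolIndicator] at hxU
    have hyU' : ¬ y ∈ U := hyU
    rw [Set.mem_iff_boolIndicator] at hyU'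
    simp only [Clopens.coe_mk] at this
    rw [hxU] at this
    exact hyU' this.symm
  have he : IsClosedEmbedding e := he_cont.isClosedEmbedding he_inj
  have hsclosed : IsClosed (e '' P) := he.isClosedMap _ hP
  have hsne : (e '' P).Nonempty := hne.image e
  obtain ⟨f, hf_fix, -, hf_cont⟩ :=
    PiNat.exists_retraction_subtype_of_isClosed (E := fun _ => Bool) hsclosed hsne
  have hrange : Set.range (e ∘ (Subtype.val : P → X)) = e '' P := by
    rw [Set.range_comp, Subtype.range_val]
  have hemb : IsEmbedding (e ∘ (Subtype.val : P → X)) :=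
    he.isEmbedding.comp IsEmbedding.subtypeVal
  let φ : P ≃ₜ Set.range (e ∘ (Subtype.val : P → X)) := hemb.toHomeomorph
  let ψ : ↥(e '' P) ≃ₜ Set.range (e ∘ (Subtype.val : P → X)) := Homeomorph.setCongr hrange.symm
  refine ⟨⟨fun x => φ.symm (ψ (f (e x))), ?_⟩, ?_⟩
  · exact φ.symm.continuous.comp (ψ.continuous.comp (hf_cont.comp he_cont))
  · intro p
    have h1 : f (e p) = ⟨e p, Set.mem_image_of_mem e p.2⟩ := hf_fix ⟨e p, Set.mem_image_of_mem e p.2⟩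
    simp only [ContinuousMap.coe_mk, h1]
    have h2 : ψ ⟨e ↑p, Set.mem_image_of_mem e p.2⟩ = φ p := Subtype.ext rfl
    rw [h2, Homeomorph.symm_apply_apply]

theorem extend_maps_into_homeo_cantor
    (X : Type*) [TopologicalSpace X] [CompactSpace X]
    [TopologicalSpace.MetrizableSpace X] [TotallyDisconnectedSpace X]
    (P : Set X) (hP : IsClosed P)
    (g : C(P, HomeoGroup' Cantor)) :
    ∃ gext : C(X, HomeoGroup' Cantor), ∀ p : P, gext (p : X) = g p := by
  rcases P.eq_empty_or_nonempty with hPe | hne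
  · refine ⟨ContinuousMap.const X ⟨ContinuousMap.id _, Homeomorph.refl _, rfl⟩, fun p => ?_⟩
    have : (p : X) ∈ (∅ : Set X) := hPe ▸ p.2
    exact absurd this (Set.notMem_empty _)
  · obtain ⟨r, hr⟩ := exists_retraction_aux X P hP hne
    refine ⟨g.comp r, fun p => ?_⟩
    simp [hr p]
end

section
/- Let X, Y be zero-dimensional paracompact spaces and C the Cantor set. Let P' ⊆ X × C and K' ⊆ Y × C be closed sets with π_X(P') = X and π_Y(K') = Y, such that for each x ∈ X the fiber {c ∈ C : (x,c) ∈ P'} is nowhere dense in C, and similarly for fibers of K'. Let f : P' → K' and g : X → Y be homeomorphisms with g ∘ π_X = π_Y ∘ f on P'. Then f extends to a homeomorphism F : X × C → Y × C with g ∘ π_X = π_Y ∘ F. -/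
/-- A space has covering dimension zero if every open cover admits a
pairwise-disjoint open refinement which still covers. -/
def CovDimZero (X : Type*) [TopologicalSpace X] : Prop :=
  ∀ 𝒰 : Set (Set X), (∀ u ∈ 𝒰, IsOpen u) → ⋃₀ 𝒰 = Set.univ →
    ∃ 𝒱 : Set (Set X), (∀ v ∈ 𝒱, IsOpen v) ∧ ⋃₀ 𝒱 = Set.univ ∧
      (∀ v ∈ 𝒱, ∃ u ∈ 𝒰, v ⊆ u) ∧ 𝒱.PairwiseDisjoint id

namespace KR

/-- agreement of two sequences up to level `n` -/
def Agr (n : ℕ) (c d : Cantor) : Prop := ∀ k < n, c k = d k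

lemma Agr.mono {n m : ℕ} {c d : Cantor} (h : Agr n c d) (hm : m ≤ n) : Agr m c d :=
  fun k hk => h k (lt_of_lt_of_le hk hm)

lemma Agr.symm {n : ℕ} {c d : Cantor} (h : Agr n c d) : Agr n d c :=
  fun k hk => (h k hk).symm

lemma Agr.trans {n : ℕ} {c d e : Cantor} (h : Agr n c d) (h' : Agr n d e) : Agr n c e :=
  fun k hk => (h k hk).trans (h' k hk)

/-- first `n` values as a list -/
def take (n : ℕ) (c : Cantor) : List Bool := List.ofFn (fun i : Fin n => c i)

@[simp] lemma take_length (n : ℕ) (c : Cantor) : (take n c).length = n := by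
  simp [take]

lemma take_getD (n : ℕ) (c : Cantor) {k : ℕ} (hk : k < n) :
    (take n c).getD k false = c k := by
  rw [List.getD_eq_getElem _ _ (by simpa using hk)]
  simp [take]

/-- the cylinder of a finite list -/
def Cyl (l : List Bool) : Set Cantor := {c | ∀ k < l.length, c k = l.getD k false}

lemma mem_Cyl {l : List Bool} {c : Cantor} :
    c ∈ Cyl l ↔ ∀ k < l.length, c k = l.getD k false := Iff.rfl

lemma mem_Cyl_take {n : ℕ} {c d : Cantor} : c ∈ Cyl (take n d) ↔ Agr n c d := by
  constructor
  · intro h k hk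
    rw [h k (by simpa using hk), take_getD n d hk]
  · intro h k hk
    rw [take_getD n d (by simpa using hk)]
    exact h k (by simpa using hk)

lemma self_mem_Cyl_take (n : ℕ) (c : Cantor) : c ∈ Cyl (take n c) :=
  mem_Cyl_take.2 (fun _ _ => rfl)

/-- canonical point of a cylinder -/
def ext0 (l : List Bool) : Cantor := fun k => l.getD k false

lemma ext0_mem (l : List Bool) : ext0 l ∈ Cyl l := fun _ _ => rfl

lemma Cyl_nonempty (l : List Bool) : (Cyl l).Nonempty := ⟨ext0 l, ext0_mem l⟩

lemma take_eq_of_mem_Cyl {l : List Bool} {c : Cantor} (h : c ∈ Cyl l) :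
    take l.length c = l := by
  apply List.ext_getElem (by simp)
  intro k h1 h2
  have := h k (by simpa using h2)
  rw [List.getD_eq_getElem _ _ h2] at this
  simpa [take] using this

lemma agr_of_mem_Cyl {l : List Bool} {c d : Cantor} (hc : c ∈ Cyl l) (hd : d ∈ Cyl l) :
    Agr l.length c d := fun k hk => (hc k hk).trans (hd k hk).symm

lemma mem_Cyl_of_agr {l : List Bool} {c d : Cantor} (hc : c ∈ Cyl l)
    (h : Agr l.length d c) : d ∈ Cyl l := fun k hk => (h k hk).trans (hc k hk)

lemma Cyl_take_subset {n m : ℕ} (c : Cantor) (h : m ≤ n) :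
    Cyl (take n c) ⊆ Cyl (take m c) := by
  intro d hd
  exact mem_Cyl_take.2 ((mem_Cyl_take.1 hd).mono h)

lemma Cyl_take_congr {n : ℕ} {c d : Cantor} (h : Agr n c d) :
    Cyl (take n c) = Cyl (take n d) := by
  ext x
  rw [mem_Cyl_take, mem_Cyl_take]
  exact ⟨fun h' => h'.trans h, fun h' => h'.trans h.symm⟩

lemma dropLast_take (n : ℕ) (c : Cantor) : (take (n+1) c).dropLast = take n c := by
  apply List.ext_getElem (by simp)
  intro k h1 h2
  simp only [take, List.getElem_dropLast, List.getElem_ofFn]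

lemma isOpen_Cyl (l : List Bool) : IsOpen (Cyl l) := by
  have : Cyl l = ⋂ k ∈ Finset.range l.length, {c : Cantor | c k = l.getD k false} := by
    ext c; simp [mem_Cyl]
  rw [this]
  apply isOpen_biInter_finset
  intro k _
  show IsOpen ((fun c : Cantor => c k) ⁻¹' {l.getD k false})
  exact IsOpen.preimage (continuous_apply k) (isOpen_discrete ({l.getD k false} : Set Bool))

lemma isClosed_Cyl (l : List Bool) : IsClosed (Cyl l) := by
  have : Cyl l = ⋂ k ∈ Finset.range l.length, {c : Cantor | c k = l.getD k false} := by
    ext c; simp [mem_Cyl]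
  rw [this]
  apply isClosed_biInter
  intro k _
  show IsClosed ((fun c : Cantor => c k) ⁻¹' {l.getD k false})
  exact IsClosed.preimage (continuous_apply k) (isClosed_discrete ({l.getD k false} : Set Bool))

/-- cylinders of a point form a neighborhood basis -/
lemma exists_Cyl_subset {s : Set Cantor} (hs : IsOpen s) {c : Cantor} (hc : c ∈ s) :
    ∃ n, Cyl (take n c) ⊆ s := by
  obtain ⟨I, u, hu, hsub⟩ := isOpen_pi_iff.1 hs c hc
  rcases I.eq_empty_or_nonempty with h | h
  · exact ⟨0, fun d _ => hsub (by simp [h])⟩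
  · refine ⟨(I.max' h) + 1, fun d hd => hsub ?_⟩
    intro i hi
    have : d i = c i := mem_Cyl_take.1 hd i (Nat.lt_succ_of_le (I.le_max' i hi))
    rw [this]
    exact (hu i hi).2

lemma continuousAt_of_agr {H : Cantor → Cantor} {a : Cantor}
    (h : ∀ m, ∃ n, ∀ c, Agr n c a → Agr m (H c) (H a)) : ContinuousAt H a := by
  intro s hs
  rw [mem_nhds_iff] at hs
  obtain ⟨t, hts, ht, hmem⟩ := hs
  obtain ⟨m, hm⟩ := exists_Cyl_subset ht hmem
  obtain ⟨n, hn⟩ := h m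
  rw [Filter.mem_map]
  apply Filter.mem_of_superset (IsOpen.mem_nhds (isOpen_Cyl (take n a)) (self_mem_Cyl_take n a))
  intro c hc
  exact hts (hm (mem_Cyl_take.2 (hn c (mem_Cyl_take.1 hc))))

end KR

namespace KR

/-- uniform continuity on the Cantor space, in terms of agreement levels -/
lemma unif_cont {u : Cantor → Cantor} (hu : Continuous u) (m : ℕ) :
    ∃ M, ∀ c d, Agr M c d → Agr m (u c) (u d) := by
  -- for each c pick a level n_c such that u maps Cyl (take n_c c) into Cyl (take m (u c))
  have key : ∀ c : Cantor, ∃ n, ∀ d, Agr n d c → Agr m (u d) (u c) := by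
    intro c
    have : IsOpen (u ⁻¹' Cyl (take m (u c))) :=
      (isOpen_Cyl _).preimage hu
    obtain ⟨n, hn⟩ := exists_Cyl_subset this (show c ∈ _ from Set.mem_preimage.2 (self_mem_Cyl_take m (u c)))
    exact ⟨n, fun d hd => mem_Cyl_take.1 (hn (mem_Cyl_take.2 hd))⟩
  choose nc hnc using key
  -- compactness: finitely many cylinders cover
  have hcov : (Set.univ : Set Cantor) ⊆ ⋃ c : Cantor, Cyl (take (nc c) c) := by
    intro c _
    exact Set.mem_iUnion.2 ⟨c, self_mem_Cyl_take _ c⟩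
  obtain ⟨t, ht⟩ := IsCompact.elim_finite_subcover isCompact_univ
    (fun c : Cantor => Cyl (take (nc c) c)) (fun c => isOpen_Cyl _) hcov
  refine ⟨(t.sup nc) + 1, fun c d hcd => ?_⟩
  obtain ⟨c₀, hc₀t, hc₀⟩ : ∃ c₀ ∈ t, c ∈ Cyl (take (nc c₀) c₀) := by
    have := ht (Set.mem_univ c)
    simpa using this
  have hd : d ∈ Cyl (take (nc c₀) c₀) := by
    apply mem_Cyl_of_agr hc₀
    simp only [take_length]
    exact (hcd.symm.mono (Nat.le_succ_of_le (Finset.le_sup hc₀t)))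
  exact ((hnc c₀ c (mem_Cyl_take.1 hc₀)).trans ((hnc c₀ d (mem_Cyl_take.1 hd)).symm))

/-- reformulation of closed nowhere dense sets -/
lemma nwd_iff {A : Set Cantor} (hA : IsClosed A) :
    IsNowhereDense A ↔ ∀ l : List Bool, ¬ Cyl l ⊆ A := by
  rw [hA.isNowhereDense_iff]
  constructor
  · intro h l hl
    obtain ⟨c, hc⟩ := Cyl_nonempty l
    have : c ∈ interior A := by
      rw [mem_interior]
      exact ⟨Cyl l, hl, isOpen_Cyl l, hc⟩
    simp [h] at this
  · intro h
    rw [Set.eq_empty_iff_forall_notMem]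
    intro c hc
    obtain ⟨n, hn⟩ := exists_Cyl_subset isOpen_interior hc
    exact h (take n c) (hn.trans interior_subset)

/-- complement density: every cylinder meets the complement of a closed nwd set -/
lemma exists_notMem_Cyl {A : Set Cantor} (h : ∀ l : List Bool, ¬ Cyl l ⊆ A)
    (l : List Bool) : ∃ c ∈ Cyl l, c ∉ A := by
  by_contra hc
  push_neg at hc
  exact h l hc

/-! ### transfer maps between cylinders -/

/-- the map sending cylinder `Cyl D` onto `Cyl E` by replacing the prefix -/
def trans (D E : List Bool) (c : Cantor) : Cantor :=
  fun k => if k < E.length then E.getD k false else c (k - E.length + D.length)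

lemma trans_continuous (D E : List Bool) : Continuous (trans D E) := by
  apply continuous_pi
  intro k
  by_cases h : k < E.length
  · simp only [trans, if_pos h]
    exact continuous_const
  · simp only [trans, if_neg h]
    exact continuous_apply _

lemma trans_mem_Cyl (D E : List Bool) (c : Cantor) : trans D E c ∈ Cyl E := by
  intro k hk
  simp [trans, if_pos hk]

lemma trans_trans {D E : List Bool} {c : Cantor} (hc : c ∈ Cyl D) :
    trans E D (trans D E c) = c := by
  funext k
  by_cases h : k < D.length
  · simp only [trans, if_pos h]
    exact (hc k h).symm
  · simp only [trans, if_neg h]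
    rw [if_neg (by omega)]
    congr 1
    omega

/-- agreement with a point in the target prefix -/
lemma trans_agr {D E : List Bool} {c b : Cantor} (hb : b ∈ Cyl E) (n : ℕ)
    (hn : n ≤ E.length) : Agr n (trans D E c) b := by
  intro k hk
  have hk' : k < E.length := lt_of_lt_of_le hk hn
  simp only [trans, if_pos hk']
  exact (hb k hk').symm

/-! ### pieces: maximal cylinders avoiding a closed set -/

/-- `l` is a piece of the complement of `A`: a maximal cylinder avoiding `A`. -/
def IsPiece (A : Set Cantor) (l : List Bool) : Prop :=
  l ≠ [] ∧ Cyl l ∩ A = ∅ ∧ (Cyl l.dropLast ∩ A).Nonempty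

lemma IsPiece.notMem {A : Set Cantor} {l : List Bool} (h : IsPiece A l) {c : Cantor}
    (hc : c ∈ Cyl l) : c ∉ A := by
  intro hcA
  have : c ∈ Cyl l ∩ A := ⟨hc, hcA⟩
  rw [h.2.1] at this
  exact this

/-- existence of the piece through a point of the complement -/
lemma exists_piece {A : Set Cantor} (hA : IsClosed A) (hne : A.Nonempty) {c : Cantor}
    (hc : c ∉ A) : ∃ l, IsPiece A l ∧ c ∈ Cyl l := by
  have h0 : ∃ n, Cyl (take n c) ∩ A = ∅ := by
    obtain ⟨n, hn⟩ := exists_Cyl_subset hA.isOpen_compl hc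
    exact ⟨n, by rw [Set.eq_empty_iff_forall_notMem]; exact fun d hd => (hn hd.1) hd.2⟩
  classical
  let n := Nat.find h0
  have hn : Cyl (take n c) ∩ A = ∅ := Nat.find_spec h0
  have hpos : n ≠ 0 := by
    intro h
    have : Cyl (take 0 c) ∩ A = ∅ := by rw [← h]; exact hn
    obtain ⟨a, ha⟩ := hne
    have : a ∈ Cyl (take 0 c) ∩ A := ⟨by intro k hk; simp [take] at hk, ha⟩
    simp_all
  obtain ⟨n', hn'⟩ : ∃ n', n = n' + 1 := ⟨n - 1, by omega⟩
  rw [hn'] at hn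
  refine ⟨take (n' + 1) c, ⟨?_, hn, ?_⟩, self_mem_Cyl_take _ c⟩
  · intro h
    have := congrArg List.length h
    simp at this
  · rw [dropLast_take]
    have := Nat.find_min h0 (m := n') (show n' < Nat.find h0 by omega)
    rw [← Set.not_nonempty_iff_eq_empty] at this
    simpa using this

/-- a piece is determined by any point of its cylinder -/
lemma piece_unique {A : Set Cantor} {l l' : List Bool} (h : IsPiece A l) (h' : IsPiece A l')
    {c : Cantor} (hc : c ∈ Cyl l) (hc' : c ∈ Cyl l') : l = l' := by
  -- both are prefixes of c
  have hl : l = take l.length c := (take_eq_of_mem_Cyl hc).symm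
  have hl' : l' = take l'.length c := (take_eq_of_mem_Cyl hc').symm
  -- wlog
  have key : ∀ l₁ l₂ : List Bool, IsPiece A l₁ → IsPiece A l₂ →
      l₁ = take l₁.length c → l₂ = take l₂.length c → l₁.length < l₂.length → False := by
    intro l₁ l₂ h₁ h₂ e₁ e₂ hlt
    -- Cyl l₂.dropLast ⊆ Cyl l₁
    have hsub : Cyl l₂.dropLast ⊆ Cyl l₁ := by
      obtain ⟨m, hm⟩ : ∃ m, l₂.length = m + 1 := by
        rcases Nat.exists_eq_add_of_lt (show 0 < l₂.length by omega) with ⟨m, hm⟩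
        exact ⟨m, by omega⟩
      have hlen : l₂.dropLast = take m c := by
        rw [e₂, hm, dropLast_take]
      rw [hlen, e₁]
      exact Cyl_take_subset c (by omega)
    obtain ⟨d, hd⟩ := h₂.2.2
    have : d ∈ Cyl l₁ ∩ A := ⟨hsub hd.1, hd.2⟩
    rw [h₁.2.1] at this
    exact this
  rcases lt_trichotomy l.length l'.length with hl2 | hl2 | hl2
  · exact absurd (key l l' h h' hl hl' hl2) (fun h => h)
  · rw [hl, hl', hl2]
  · exact absurd (key l' l h' h hl' hl hl2) (fun h => h)

/-- pieces arbitrarily deep near any point of `A` (needs complement dense) -/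
lemma piece_near {A : Set Cantor} (hA : IsClosed A) (hnwd : ∀ l : List Bool, ¬ Cyl l ⊆ A)
    {a : Cantor} (ha : a ∈ A) (n : ℕ) :
    ∃ l, IsPiece A l ∧ n < l.length ∧ Cyl l ⊆ Cyl (take n a) := by
  obtain ⟨c, hcmem, hc⟩ := exists_notMem_Cyl hnwd (take n a)
  obtain ⟨l, hl, hcl⟩ := exists_piece hA ⟨a, ha⟩ hc
  have hlc : l = take l.length c := (take_eq_of_mem_Cyl hcl).symm
  have hlen : n < l.length := by
    by_contra hle
    push_neg at hle
    -- then a ∈ Cyl l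
    have : a ∈ Cyl l := by
      apply mem_Cyl_of_agr hcl
      rw [hlc]
      simp only [take_length]
      exact (mem_Cyl_take.1 hcmem).symm.mono hle
    exact hl.notMem this ha
  refine ⟨l, hl, hlen, ?_⟩
  intro d hd
  apply mem_Cyl_take.2
  have h1 : Agr l.length d c := by
    rw [hlc] at hd
    exact mem_Cyl_take.1 hd
  exact (h1.mono (le_of_lt hlen)).trans (mem_Cyl_take.1 hcmem)

/-- enumeration of the pieces of a closed nowhere dense nonempty set -/
lemma exists_enum {A : Set Cantor} (hA : IsClosed A) (hnwd : ∀ l : List Bool, ¬ Cyl l ⊆ A)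
    (hne : A.Nonempty) :
    ∃ F : ℕ → List Bool, (∀ n, IsPiece A (F n)) ∧ Function.Injective F ∧
      ∀ l, IsPiece A l → ∃ n, F n = l := by
  have hcount : {l : List Bool | IsPiece A l}.Countable := Set.to_countable _
  have hinf : {l : List Bool | IsPiece A l}.Infinite := by
    intro hfin
    obtain ⟨a, ha⟩ := hne
    -- lengths are bounded
    obtain ⟨N, hN⟩ : ∃ N, ∀ l ∈ {l : List Bool | IsPiece A l}, l.length ≤ N := by
      have himg : ((fun l : List Bool => l.length) '' {l | IsPiece A l}).Finite := hfin.image _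
      rcases himg.bddAbove with ⟨N, hNb⟩
      exact ⟨N, fun l hl => hNb (Set.mem_image_of_mem _ hl)⟩
    obtain ⟨l, hl, hlen, _⟩ := piece_near hA hnwd ha N
    have := hN l hl
    omega
  haveI := hcount.to_subtype
  haveI := hinf.to_subtype
  haveI : Encodable ↥{l : List Bool | IsPiece A l} := Encodable.ofCountable _
  haveI : Denumerable ↥{l : List Bool | IsPiece A l} := Denumerable.ofEncodableOfInfinite _
  let eqv := (Denumerable.eqv ↥{l : List Bool | IsPiece A l}).symm
  refine ⟨fun n => (eqv n).val, fun n => (eqv n).2, ?_, ?_⟩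
  · intro n m h
    have : eqv n = eqv m := Subtype.ext h
    exact eqv.injective this
  · intro l hl
    refine ⟨eqv.symm ⟨l, hl⟩, ?_⟩
    show ((eqv (eqv.symm ⟨l, hl⟩)) : List Bool) = l
    rw [Equiv.apply_symm_apply]

end KR

namespace KR

/-- a matched pair of pieces together with an accuracy index -/
structure BF where
  D : List Bool
  E : List Bool
  r : ℕ

/-- data for the Knaster–Reichbach construction -/
structure Setting where
  A : Set Cantor
  B : Set Cantor
  e : Cantor → Cantor
  e' : Cantor → Cantor
  eA : ℕ → List Bool
  eB : ℕ → List Bool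

/-- hypotheses for the Knaster–Reichbach construction -/
structure Setting.OK (s : Setting) : Prop where
  closedA : IsClosed s.A
  closedB : IsClosed s.B
  nwdA : ∀ l : List Bool, ¬ Cyl l ⊆ s.A
  nwdB : ∀ l : List Bool, ¬ Cyl l ⊆ s.B
  neA : s.A.Nonempty
  mapsAB : ∀ a ∈ s.A, s.e a ∈ s.B
  mapsBA : ∀ b ∈ s.B, s.e' b ∈ s.A
  inv1 : ∀ a ∈ s.A, s.e' (s.e a) = a
  inv2 : ∀ b ∈ s.B, s.e (s.e' b) = b
  contA : ContinuousOn s.e s.A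
  enumA1 : ∀ n, IsPiece s.A (s.eA n)
  enumA3 : ∀ l, IsPiece s.A l → ∃ n, s.eA n = l
  enumB1 : ∀ n, IsPiece s.B (s.eB n)
  enumB3 : ∀ l, IsPiece s.B l → ∃ n, s.eB n = l

lemma Setting.OK.neB {s : Setting} (h : s.OK) : s.B.Nonempty :=
  ⟨s.e h.neA.choose, h.mapsAB _ h.neA.choose_spec⟩

/-- anchor condition for a matched pair -/
def Anchor (s : Setting) (p : BF) : Prop :=
  (∃ a ∈ s.A, a ∈ Cyl p.D.dropLast ∧ Cyl p.E ⊆ Cyl (take p.r (s.e a))) ∨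
  (∃ b ∈ s.B, b ∈ Cyl p.E.dropLast ∧ Cyl p.D ⊆ Cyl (take p.r (s.e' b)))

def Good (s : Setting) (p : BF) : Prop :=
  IsPiece s.A p.D ∧ IsPiece s.B p.E ∧ Anchor s p

def CondF (s : Setting) (n : ℕ) (L : List BF) (p : BF) : Prop :=
  p.D = s.eA (n/2) ∧ p.r = n ∧ IsPiece s.B p.E ∧ (∀ q ∈ L, q.E ≠ p.E) ∧
  ∃ a ∈ s.A, a ∈ Cyl p.D.dropLast ∧ Cyl p.E ⊆ Cyl (take n (s.e a))

def CondB (s : Setting) (n : ℕ) (L : List BF) (p : BF) : Prop :=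
  p.E = s.eB (n/2) ∧ p.r = n ∧ IsPiece s.A p.D ∧ (∀ q ∈ L, q.D ≠ p.D) ∧
  ∃ b ∈ s.B, b ∈ Cyl p.E.dropLast ∧ Cyl p.D ⊆ Cyl (take n (s.e' b))

open Classical in
/-- one step of the back-and-forth construction -/
noncomputable def step (s : Setting) (n : ℕ) (L : List BF) : List BF :=
  if n % 2 = 0 then
    if s.eA (n/2) ∈ L.map BF.D then [] else
      if h : ∃ p, CondF s n L p then [h.choose] else []
  else
    if s.eB (n/2) ∈ L.map BF.E then [] else
      if h : ∃ p, CondB s n L p then [h.choose] else []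

/-- the sequence of partial matchings -/
noncomputable def S (s : Setting) : ℕ → List BF
  | 0 => []
  | n+1 => S s n ++ step s n (S s n)

lemma exCondF (s : Setting) (hs : s.OK) (n : ℕ) (L : List BF) : ∃ p, CondF s n L p := by
  have hD : IsPiece s.A (s.eA (n/2)) := hs.enumA1 _
  obtain ⟨a, ha⟩ := hD.2.2
  have hb : s.e a ∈ s.B := hs.mapsAB a ha.2
  set N := n + (L.map fun q => q.E.length).sum with hN
  obtain ⟨l, hl, hlen, hsub⟩ := piece_near hs.closedB hs.nwdB hb N
  refine ⟨⟨s.eA (n/2), l, n⟩, rfl, rfl, hl, ?_, ⟨a, ha.2, ha.1, ?_⟩⟩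
  · intro q hq hqel
    have h1 : q.E.length ≤ (L.map fun q => q.E.length).sum :=
      List.single_le_sum (by simp) _ (by simp; exact ⟨q, hq, rfl⟩)
    have h2 : q.E = l := hqel
    rw [h2] at h1
    omega
  · exact hsub.trans (Cyl_take_subset _ (by omega))

lemma exCondB (s : Setting) (hs : s.OK) (n : ℕ) (L : List BF) : ∃ p, CondB s n L p := by
  have hE : IsPiece s.B (s.eB (n/2)) := hs.enumB1 _
  obtain ⟨b, hb⟩ := hE.2.2
  have ha : s.e' b ∈ s.A := hs.mapsBA b hb.2
  set N := n + (L.map fun q => q.D.length).sum with hN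
  obtain ⟨l, hl, hlen, hsub⟩ := piece_near hs.closedA hs.nwdA ha N
  refine ⟨⟨l, s.eB (n/2), n⟩, rfl, rfl, hl, ?_, ⟨b, hb.2, hb.1, ?_⟩⟩
  · intro q hq hqel
    have h1 : q.D.length ≤ (L.map fun q => q.D.length).sum :=
      List.single_le_sum (by simp) _ (by simp; exact ⟨q, hq, rfl⟩)
    have h2 : q.D = l := hqel
    rw [h2] at h1
    omega
  · exact hsub.trans (Cyl_take_subset _ (by omega))

lemma step_spec {s : Setting} {n : ℕ} {L : List BF} {p : BF} (hp : p ∈ step s n L) :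
    (CondF s n L p ∧ s.eA (n/2) ∉ L.map BF.D) ∨ (CondB s n L p ∧ s.eB (n/2) ∉ L.map BF.E) := by
  unfold step at hp
  split_ifs at hp with h1 h2 h3 h4 h5
  · simp at hp
  · left
    simp only [List.mem_singleton] at hp
    subst hp
    exact ⟨h3.choose_spec, h2⟩
  · simp at hp
  · simp at hp
  · right
    simp only [List.mem_singleton] at hp
    subst hp
    exact ⟨h5.choose_spec, h4⟩
  · simp at hp

lemma S_succ (s : Setting) (n : ℕ) : S s (n+1) = S s n ++ step s n (S s n) := rfl

lemma S_mono {s : Setting} {p : BF} {n m : ℕ} (h : n ≤ m) (hp : p ∈ S s n) : p ∈ S s m := by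
  induction m with
  | zero => exact (Nat.le_zero.mp h) ▸ hp
  | succ k ih =>
    rcases Nat.lt_or_ge n (k+1) with h' | h'
    · rw [S_succ]
      exact List.mem_append_left _ (ih (by omega))
    · have : n = k + 1 := by omega
      rwa [← this]

lemma S_good {s : Setting} (hs : s.OK) {p : BF} {n : ℕ} (hp : p ∈ S s n) :
    Good s p ∧ p.r < n := by
  induction n with
  | zero => simp [S] at hp
  | succ k ih =>
    rw [S_succ] at hp
    rcases List.mem_append.1 hp with h | h
    · obtain ⟨h1, h2⟩ := ih h
      exact ⟨h1, by omega⟩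
    · rcases step_spec h with ⟨hc, _⟩ | ⟨hc, _⟩
      · have hr := hc.2.1
        refine ⟨⟨by rw [hc.1]; exact hs.enumA1 _, hc.2.2.1, Or.inl ?_⟩, by omega⟩
        obtain ⟨a, ha, h3, h4⟩ := hc.2.2.2.2
        exact ⟨a, ha, h3, by rw [hc.2.1]; exact h4⟩
      · have hr := hc.2.1
        refine ⟨⟨hc.2.2.1, by rw [hc.1]; exact hs.enumB1 _, Or.inr ?_⟩, by omega⟩
        obtain ⟨b, hb, h3, h4⟩ := hc.2.2.2.2
        exact ⟨b, hb, h3, by rw [hc.2.1]; exact h4⟩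

lemma S_injD {s : Setting} {p q : BF} {n : ℕ} (hp : p ∈ S s n) (hq : q ∈ S s n)
    (hpq : p.D = q.D) : p = q := by
  induction n with
  | zero => simp [S] at hp
  | succ k ih =>
    rw [S_succ] at hp hq
    rcases List.mem_append.1 hp with h1 | h1 <;> rcases List.mem_append.1 hq with h2 | h2
    · exact ih h1 h2
    · exfalso
      rcases step_spec h2 with ⟨hc, hg⟩ | ⟨hc, _⟩
      · exact hg (by rw [← hc.1, ← hpq]; exact List.mem_map.2 ⟨p, h1, rfl⟩)
      · exact hc.2.2.2.1 p h1 hpq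
    · exfalso
      rcases step_spec h1 with ⟨hc, hg⟩ | ⟨hc, _⟩
      · exact hg (by rw [← hc.1, hpq]; exact List.mem_map.2 ⟨q, h2, rfl⟩)
      · exact hc.2.2.2.1 q h2 hpq.symm
    · -- both new: step has at most one element
      unfold step at h1 h2
      split_ifs at h1 h2 <;> simp_all
lemma S_injE {s : Setting} {p q : BF} {n : ℕ} (hp : p ∈ S s n) (hq : q ∈ S s n)
    (hpq : p.E = q.E) : p = q := by
  induction n with
  | zero => simp [S] at hp
  | succ k ih =>
    rw [S_succ] at hp hq
    rcases List.mem_append.1 hp with h1 | h1 <;> rcases List.mem_append.1 hq with h2 | h2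
    · exact ih h1 h2
    · exfalso
      rcases step_spec h2 with ⟨hc, _⟩ | ⟨hc, hg⟩
      · exact hc.2.2.2.1 p h1 hpq
      · exact hg (by rw [← hc.1, ← hpq]; exact List.mem_map.2 ⟨p, h1, rfl⟩)
    · exfalso
      rcases step_spec h1 with ⟨hc, _⟩ | ⟨hc, hg⟩
      · exact hc.2.2.2.1 q h2 hpq.symm
      · exact hg (by rw [← hc.1, hpq]; exact List.mem_map.2 ⟨q, h2, rfl⟩)
    · unfold step at h1 h2
      split_ifs at h1 h2 <;> simp_all

lemma S_injR {s : Setting} (hs : s.OK) {p q : BF} {n : ℕ} (hp : p ∈ S s n) (hq : q ∈ S s n)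
    (hpq : p.r = q.r) : p = q := by
  induction n with
  | zero => simp [S] at hp
  | succ k ih =>
    rw [S_succ] at hp hq
    have hnew : ∀ x ∈ step s k (S s k), x.r = k := by
      intro x hx
      rcases step_spec hx with ⟨hc, _⟩ | ⟨hc, _⟩ <;> exact hc.2.1
    rcases List.mem_append.1 hp with h1 | h1 <;> rcases List.mem_append.1 hq with h2 | h2
    · exact ih h1 h2
    · exact absurd hpq (by have t1 := (S_good hs h1).2; have t2 := hnew q h2; omega)
    · exact absurd hpq (by have t1 := (S_good hs h2).2; have t2 := hnew p h1; omega)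
    · unfold step at h1 h2
      split_ifs at h1 h2 <;> simp_all

lemma S_fairA {s : Setting} (hs : s.OK) (k : ℕ) :
    ∃ p ∈ S s (2*k+1), p.D = s.eA k := by
  have hk : (2*k) % 2 = 0 := by omega
  have hk2 : (2*k) / 2 = k := by omega
  by_cases hmem : s.eA k ∈ (S s (2*k)).map BF.D
  · obtain ⟨p, hp, hpD⟩ := List.mem_map.1 hmem
    exact ⟨p, S_mono (by omega) hp, hpD⟩
  · have hex : ∃ p, CondF s (2*k) (S s (2*k)) p := exCondF s hs _ _
    refine ⟨hex.choose, ?_, by rw [hex.choose_spec.1, hk2]⟩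
    rw [S_succ]
    apply List.mem_append_right
    unfold step
    rw [if_pos hk, hk2, if_neg hmem, dif_pos hex]
    simp

lemma S_fairB {s : Setting} (hs : s.OK) (k : ℕ) :
    ∃ p ∈ S s (2*k+2), p.E = s.eB k := by
  have hk : (2*k+1) % 2 ≠ 0 := by omega
  have hk2 : (2*k+1) / 2 = k := by omega
  by_cases hmem : s.eB k ∈ (S s (2*k+1)).map BF.E
  · obtain ⟨p, hp, hpE⟩ := List.mem_map.1 hmem
    exact ⟨p, S_mono (by omega) hp, hpE⟩
  · have hex : ∃ p, CondB s (2*k+1) (S s (2*k+1)) p := exCondB s hs _ _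
    refine ⟨hex.choose, ?_, by rw [hex.choose_spec.1, hk2]⟩
    have : 2*k+2 = (2*k+1) + 1 := by omega
    rw [this, S_succ]
    apply List.mem_append_right
    unfold step
    rw [if_neg hk, hk2, if_neg hmem, dif_pos hex]
    simp

/-- the global matching -/
def GP (s : Setting) : Set BF := {p | ∃ n, p ∈ S s n}

lemma GP_good {s : Setting} (hs : s.OK) {p : BF} (hp : p ∈ GP s) : Good s p :=
  (S_good hs hp.choose_spec).1

lemma GP_injD {s : Setting} (hs : s.OK) {p q : BF} (hp : p ∈ GP s) (hq : q ∈ GP s)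
    (h : p.D = q.D) : p = q := by
  obtain ⟨n, hn⟩ := hp
  obtain ⟨m, hm⟩ := hq
  exact S_injD (S_mono (le_max_left n m) hn) (S_mono (le_max_right n m) hm) h

lemma GP_injE {s : Setting} (hs : s.OK) {p q : BF} (hp : p ∈ GP s) (hq : q ∈ GP s)
    (h : p.E = q.E) : p = q := by
  obtain ⟨n, hn⟩ := hp
  obtain ⟨m, hm⟩ := hq
  exact S_injE (S_mono (le_max_left n m) hn) (S_mono (le_max_right n m) hm) h

lemma GP_injR {s : Setting} (hs : s.OK) {p q : BF} (hp : p ∈ GP s) (hq : q ∈ GP s)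
    (h : p.r = q.r) : p = q := by
  obtain ⟨n, hn⟩ := hp
  obtain ⟨m, hm⟩ := hq
  exact S_injR hs (S_mono (le_max_left n m) hn) (S_mono (le_max_right n m) hm) h

lemma GP_exD {s : Setting} (hs : s.OK) {l : List Bool} (hl : IsPiece s.A l) :
    ∃ p ∈ GP s, p.D = l := by
  obtain ⟨k, hk⟩ := hs.enumA3 l hl
  obtain ⟨p, hp, hpD⟩ := S_fairA hs k
  exact ⟨p, ⟨_, hp⟩, by rw [hpD, hk]⟩

lemma GP_exE {s : Setting} (hs : s.OK) {l : List Bool} (hl : IsPiece s.B l) :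
    ∃ p ∈ GP s, p.E = l := by
  obtain ⟨k, hk⟩ := hs.enumB3 l hl
  obtain ⟨p, hp, hpE⟩ := S_fairB hs k
  exact ⟨p, ⟨_, hp⟩, by rw [hpE, hk]⟩

lemma GP_finR {s : Setting} (hs : s.OK) (N : ℕ) : {p ∈ GP s | p.r ≤ N}.Finite := by
  apply Set.Finite.of_finite_image (f := BF.r)
  · exact (Set.finite_Icc 0 N).subset (by rintro _ ⟨p, ⟨_, hr⟩, rfl⟩; simp; omega)
  · intro p hp q hq h
    exact GP_injR hs hp.1 hq.1 h

lemma GP_finE {s : Setting} (hs : s.OK) (N : ℕ) : {p ∈ GP s | p.E.length ≤ N}.Finite := by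
  apply Set.Finite.of_finite_image (f := BF.E)
  · apply Set.Finite.subset (List.finite_length_le Bool N)
    rintro _ ⟨p, ⟨_, hr⟩, rfl⟩
    exact hr
  · intro p hp q hq h
    exact GP_injE hs hp.1 hq.1 h

end KR

namespace KR

lemma Cyl_subset_dropLast (l : List Bool) : Cyl l ⊆ Cyl l.dropLast := by
  intro c hc k hk
  rw [List.length_dropLast] at hk
  rw [List.getD_eq_getElem _ _ (by rw [List.length_dropLast]; exact hk), List.getElem_dropLast]
  have := hc k (by omega)
  rwa [List.getD_eq_getElem _ _ (by omega)] at this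

/-- continuity on a set, in terms of agreement levels -/
lemma contOn_agr {e : Cantor → Cantor} {A : Set Cantor} (he : ContinuousOn e A) {a : Cantor}
    (ha : a ∈ A) (m : ℕ) : ∃ n, ∀ a' ∈ A, Agr n a' a → Agr m (e a') (e a) := by
  have h1 : e ⁻¹' (Cyl (take m (e a))) ∈ nhdsWithin a A := by
    apply he a ha
    exact (isOpen_Cyl _).mem_nhds (self_mem_Cyl_take _ _)
  rw [mem_nhdsWithin] at h1
  obtain ⟨U, hU, haU, hsub⟩ := h1
  obtain ⟨n, hn⟩ := exists_Cyl_subset hU haU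
  refine ⟨n, fun a' ha' hagr => ?_⟩
  have : a' ∈ U ∩ A := ⟨hn (mem_Cyl_take.2 hagr), ha'⟩
  exact mem_Cyl_take.1 (hsub this)

/-- The core gluing theorem: a continuous bijective extension of `e`. -/
theorem KRmain (s : Setting) (hs : s.OK) :
    ∃ H : Cantor → Cantor, Continuous H ∧ Function.Bijective H ∧ ∀ a ∈ s.A, H a = s.e a := by
  classical
  -- piece selector for A
  have coverA : ∀ c : Cantor, ∃ l, c ∉ s.A → (IsPiece s.A l ∧ c ∈ Cyl l) := by
    intro c
    by_cases hc : c ∈ s.A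
    · exact ⟨[], fun h => absurd hc h⟩
    · obtain ⟨l, h1, h2⟩ := exists_piece hs.closedA hs.neA hc
      exact ⟨l, fun _ => ⟨h1, h2⟩⟩
  choose pc hpc using coverA
  have coverB : ∀ c : Cantor, ∃ l, c ∉ s.B → (IsPiece s.B l ∧ c ∈ Cyl l) := by
    intro c
    by_cases hc : c ∈ s.B
    · exact ⟨[], fun h => absurd hc h⟩
    · obtain ⟨l, h1, h2⟩ := exists_piece hs.closedB hs.neB hc
      exact ⟨l, fun _ => ⟨h1, h2⟩⟩
  choose pcB hpcB using coverB
  -- lookup of matched pairs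
  have lkDex : ∀ l : List Bool, ∃ p : BF, IsPiece s.A l → (p ∈ GP s ∧ p.D = l) := by
    intro l
    by_cases hl : IsPiece s.A l
    · obtain ⟨p, h1, h2⟩ := GP_exD hs hl
      exact ⟨p, fun _ => ⟨h1, h2⟩⟩
    · exact ⟨⟨[], [], 0⟩, fun h => absurd h hl⟩
  choose lkD hlkD using lkDex
  have lkEex : ∀ l : List Bool, ∃ p : BF, IsPiece s.B l → (p ∈ GP s ∧ p.E = l) := by
    intro l
    by_cases hl : IsPiece s.B l
    · obtain ⟨p, h1, h2⟩ := GP_exE hs hl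
      exact ⟨p, fun _ => ⟨h1, h2⟩⟩
    · exact ⟨⟨[], [], 0⟩, fun h => absurd h hl⟩
  choose lkE hlkE using lkEex
  set H : Cantor → Cantor :=
    fun c => if c ∈ s.A then s.e c else trans (lkD (pc c)).D (lkD (pc c)).E c with hH
  set H' : Cantor → Cantor :=
    fun d => if d ∈ s.B then s.e' d else trans (lkE (pcB d)).E (lkE (pcB d)).D d with hH'
  have HA : ∀ a ∈ s.A, H a = s.e a := fun a ha => if_pos ha
  have Hn : ∀ c, c ∉ s.A → H c = trans (lkD (pc c)).D (lkD (pc c)).E c :=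
    fun c hc => if_neg hc
  have H'B : ∀ b ∈ s.B, H' b = s.e' b := fun b hb => if_pos hb
  have H'n : ∀ d, d ∉ s.B → H' d = trans (lkE (pcB d)).E (lkE (pcB d)).D d :=
    fun d hd => if_neg hd
  -- basic facts about the pair attached to a non-member point
  have pairD : ∀ c, (hc : c ∉ s.A) →
      (lkD (pc c)) ∈ GP s ∧ c ∈ Cyl (lkD (pc c)).D := by
    intro c hc
    obtain ⟨h1, h2⟩ := hpc c hc
    obtain ⟨h3, h4⟩ := hlkD (pc c) h1
    exact ⟨h3, by rw [h4]; exact h2⟩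
  have pairE : ∀ d, (hd : d ∉ s.B) →
      (lkE (pcB d)) ∈ GP s ∧ d ∈ Cyl (lkE (pcB d)).E := by
    intro d hd
    obtain ⟨h1, h2⟩ := hpcB d hd
    obtain ⟨h3, h4⟩ := hlkE (pcB d) h1
    exact ⟨h3, by rw [h4]; exact h2⟩
  -- left inverse
  have hleft : Function.LeftInverse H' H := by
    intro c
    by_cases hc : c ∈ s.A
    · rw [HA c hc, H'B _ (hs.mapsAB c hc)]
      exact hs.inv1 c hc
    · obtain ⟨hGP, hcD⟩ := pairD c hc
      set p := lkD (pc c) with hp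
      have hgood := GP_good hs hGP
      rw [Hn c hc]
      have hmemE : trans p.D p.E c ∈ Cyl p.E := trans_mem_Cyl _ _ _
      have hnotB : trans p.D p.E c ∉ s.B := hgood.2.1.notMem hmemE
      rw [H'n _ hnotB]
      -- the piece of the image is p.E
      obtain ⟨h1, h2⟩ := hpcB _ hnotB
      have hpcEq : pcB (trans p.D p.E c) = p.E := piece_unique h1 hgood.2.1 h2 hmemE
      have hq : lkE (pcB (trans p.D p.E c)) = p := by
        have h3 := hlkE (pcB (trans p.D p.E c)) h1
        apply GP_injE hs h3.1 hGP
        rw [h3.2, hpcEq]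
      rw [hq]
      exact trans_trans hcD
  -- right inverse
  have hright : Function.RightInverse H' H := by
    intro d
    by_cases hd : d ∈ s.B
    · rw [H'B d hd, HA _ (hs.mapsBA d hd)]
      exact hs.inv2 d hd
    · obtain ⟨hGP, hdE⟩ := pairE d hd
      set q := lkE (pcB d) with hqdef
      have hgood := GP_good hs hGP
      rw [H'n d hd]
      have hmemD : trans q.E q.D d ∈ Cyl q.D := trans_mem_Cyl _ _ _
      have hnotA : trans q.E q.D d ∉ s.A := hgood.1.notMem hmemD
      rw [Hn _ hnotA]
      obtain ⟨h1, h2⟩ := hpc _ hnotA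
      have hpcEq : pc (trans q.E q.D d) = q.D := piece_unique h1 hgood.1 h2 hmemD
      have hp : lkD (pc (trans q.E q.D d)) = q := by
        have h3 := hlkD (pc (trans q.E q.D d)) h1
        apply GP_injD hs h3.1 hGP
        rw [h3.2, hpcEq]
      rw [hp]
      exact trans_trans hdE
  -- continuity
  have hcont : Continuous H := by
    rw [continuous_iff_continuousAt]
    intro c
    by_cases hc : c ∈ s.A
    · -- continuity at points of A
      apply continuousAt_of_agr
      intro m
      obtain ⟨n₁, hn₁⟩ := contOn_agr hs.contA hc m
      set Bad := {p ∈ GP s | p.r ≤ max m n₁ ∨ p.E.length ≤ m + 1} with hBad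
      have hBadFin : Bad.Finite := by
        apply Set.Finite.subset ((GP_finR hs (max m n₁)).union (GP_finE hs (m+1)))
        rintro p ⟨h1, h2 | h2⟩
        · exact Or.inl ⟨h1, h2⟩
        · exact Or.inr ⟨h1, h2⟩
      have avoid : ∀ p : BF, ∃ np, p ∈ Bad → Cyl (take np c) ∩ Cyl p.D = ∅ := by
        intro p
        by_cases hp : p ∈ Bad
        · have hpiece : IsPiece s.A p.D := (GP_good hs hp.1).1
          have hnot : c ∉ Cyl p.D := fun h => hpiece.notMem h hc
          obtain ⟨np, hnp⟩ := exists_Cyl_subset (isClosed_Cyl p.D).isOpen_compl hnot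
          refine ⟨np, fun _ => ?_⟩
          rw [Set.eq_empty_iff_forall_notMem]
          rintro d ⟨hd1, hd2⟩
          exact (hnp hd1) hd2
        · exact ⟨0, fun h => absurd h hp⟩
      choose np hnp using avoid
      set n₂ := hBadFin.toFinset.sup np with hn₂
      refine ⟨n₂ + n₁ + m + 2, fun d hd => ?_⟩
      by_cases hdA : d ∈ s.A
      · rw [HA d hdA, HA c hc]
        exact hn₁ d hdA (hd.mono (by omega))
      · rw [Hn d hdA, HA c hc]
        obtain ⟨hGP, hdD⟩ := pairD d hdA
        set p := lkD (pc d) with hpdef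
        have hgood := GP_good hs hGP
        have hnotbad : p ∉ Bad := by
          intro hbad
          have h1 : Cyl (take (np p) c) ∩ Cyl p.D = ∅ := hnp p hbad
          have hle : np p ≤ n₂ := Finset.le_sup (hBadFin.mem_toFinset.2 hbad)
          have h2 : d ∈ Cyl (take (np p) c) := mem_Cyl_take.2 (hd.mono (by omega))
          rw [Set.eq_empty_iff_forall_notMem] at h1
          exact h1 d ⟨h2, hdD⟩
        have hr : max m n₁ < p.r ∧ m + 1 < p.E.length := by
          by_contra hcon
          apply hnotbad
          refine ⟨hGP, ?_⟩
          push_neg at hcon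
          rcases Nat.lt_or_ge (max m n₁) p.r with h | h
          · exact Or.inr (by have := hcon h; omega)
          · exact Or.inl h
        have hlenD : n₂ + n₁ + m + 2 < p.D.length := by
          by_contra hle
          push_neg at hle
          have : c ∈ Cyl p.D := mem_Cyl_of_agr hdD ((hd.symm).mono (by omega))
          exact hgood.1.notMem this hc
        have hHd : trans p.D p.E d ∈ Cyl p.E := trans_mem_Cyl _ _ _
        rcases hgood.2.2 with ⟨a', ha'A, ha'D, hsub⟩ | ⟨b, hbB, hbE, hsub⟩
        · -- forward anchor
          have i1 : Agr (p.D.dropLast.length) a' d :=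
            agr_of_mem_Cyl ha'D (Cyl_subset_dropLast _ hdD)
          have i2 : p.D.dropLast.length = p.D.length - 1 := List.length_dropLast
          have h1 : Agr n₁ a' c := by
            refine ((i1.mono (by omega)).trans (hd.mono (by omega)))
          have h2 : Agr m (s.e a') (s.e c) := hn₁ a' ha'A h1
          have h3 : Agr p.r (trans p.D p.E d) (s.e a') := mem_Cyl_take.1 (hsub hHd)
          exact (h3.mono (by omega)).trans h2
        · -- backward anchor
          have h1 : Agr p.r d (s.e' b) := mem_Cyl_take.1 (hsub hdD)
          have h2 : Agr n₁ (s.e' b) c :=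
            ((h1.symm).mono (by omega)).trans (hd.mono (by omega))
          have h3 : Agr m (s.e (s.e' b)) (s.e c) := hn₁ _ (hs.mapsBA b hbB) h2
          rw [hs.inv2 b hbB] at h3
          have h4 : Agr (p.E.dropLast.length) (trans p.D p.E d) b :=
            agr_of_mem_Cyl (Cyl_subset_dropLast _ hHd) hbE
          have i2 : p.E.dropLast.length = p.E.length - 1 := List.length_dropLast
          exact ((h4.mono (by omega)).trans h3)
    · -- continuity off A
      obtain ⟨hGP, hcD⟩ := pairD c hc
      set p := lkD (pc c) with hpdef
      have key : ∀ c' ∈ Cyl p.D, H c' = trans p.D p.E c' := by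
        intro c' hc'
        have hc'A : c' ∉ s.A := (GP_good hs hGP).1.notMem hc'
        rw [Hn c' hc'A]
        obtain ⟨h1, h2⟩ := hpc c' hc'A
        have h4 := (hlkD (pc c') h1).2
        have hpcEq : pc c' = p.D := piece_unique h1 (GP_good hs hGP).1 h2 hc'
        have : lkD (pc c') = p := by
          apply GP_injD hs (hlkD (pc c') h1).1 hGP
          rw [h4, hpcEq]
        rw [this]
      apply ContinuousAt.congr ((trans_continuous p.D p.E).continuousAt)
      apply Filter.eventuallyEq_of_mem ((isOpen_Cyl p.D).mem_nhds hcD)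
      intro c' hc'
      exact (key c' hc').symm
  exact ⟨H, hcont, Function.bijective_iff_has_inverse.2 ⟨H', hleft, hright⟩, HA⟩

end KR

namespace KR

lemma mem_Cyl_nil (c : Cantor) : c ∈ Cyl ([] : List Bool) := by
  intro k hk
  simp at hk

/-- flat version of the Knaster–Reichbach extension theorem -/
theorem KRext (A B : Set Cantor) (hA : IsClosed A) (hB : IsClosed B)
    (hAnwd : IsNowhereDense A) (hBnwd : IsNowhereDense B)
    (e e' : Cantor → Cantor) (he : ContinuousOn e A)
    (hAB : ∀ a ∈ A, e a ∈ B) (hBA : ∀ b ∈ B, e' b ∈ A)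
    (h1 : ∀ a ∈ A, e' (e a) = a) (h2 : ∀ b ∈ B, e (e' b) = b) :
    ∃ H : Cantor → Cantor, Continuous H ∧ Function.Bijective H ∧ ∀ a ∈ A, H a = e a := by
  rcases A.eq_empty_or_nonempty with hAe | hAne
  · have hBe : B = ∅ := by
      rw [Set.eq_empty_iff_forall_notMem]
      intro b hb
      have := hBA b hb
      rw [hAe] at this
      exact this
    exact ⟨id, continuous_id, Function.bijective_id, fun a ha => by
      rw [hAe] at ha; exact absurd ha (Set.notMem_empty a)⟩
  · have hBne : B.Nonempty := ⟨e hAne.choose, hAB _ hAne.choose_spec⟩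
    obtain ⟨eA, heA1, _, heA3⟩ := exists_enum hA ((nwd_iff hA).1 hAnwd) hAne
    obtain ⟨eB, heB1, _, heB3⟩ := exists_enum hB ((nwd_iff hB).1 hBnwd) hBne
    exact KRmain ⟨A, B, e, e', eA, eB⟩
      ⟨hA, hB, (nwd_iff hA).1 hAnwd, (nwd_iff hB).1 hBnwd, hAne, hAB, hBA, h1, h2, he,
        heA1, heA3, heB1, heB3⟩

lemma trans_nil_mem_Cyl (l : List Bool) (c : Cantor) : trans [] l c ∈ Cyl l :=
  trans_mem_Cyl [] l c

lemma trans_nil_apply (l : List Bool) (c : Cantor) (k : ℕ) (h : ¬ k < l.length) :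
    trans [] l c k = c (k - l.length) := by
  simp only [trans, if_neg h, List.length_nil, Nat.add_zero]

lemma trans_proj_apply (l : List Bool) (c : Cantor) (k : ℕ) :
    trans l [] c k = c (k + l.length) := by
  simp only [trans, List.length_nil, Nat.not_lt_zero, if_false, Nat.sub_zero]

/-- Knaster–Reichbach with prefix control: if `e` moves no point across level-`m`
cylinders, neither does the extension. -/
theorem KRlevel (A B : Set Cantor) (hA : IsClosed A) (hB : IsClosed B)
    (hAnwd : IsNowhereDense A) (hBnwd : IsNowhereDense B)
    (e e' : Cantor → Cantor) (he : ContinuousOn e A)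
    (hAB : ∀ a ∈ A, e a ∈ B) (hBA : ∀ b ∈ B, e' b ∈ A)
    (h1 : ∀ a ∈ A, e' (e a) = a) (h2 : ∀ b ∈ B, e (e' b) = b)
    (m : ℕ) (hagr : ∀ a ∈ A, Agr m (e a) a) :
    ∃ H : Cantor ≃ₜ Cantor, (∀ a ∈ A, H a = e a) ∧ ∀ c, Agr m (H c) c ∧ Agr m (H.symm c) c := by
  classical
  -- per-cylinder data
  have key : ∀ l : List Bool, ∃ Hl : Cantor → Cantor, l.length = m →
      (Continuous Hl ∧ Function.Bijective Hl ∧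
        ∀ a₀, trans [] l a₀ ∈ A → Hl a₀ = trans l [] (e (trans [] l a₀))) := by
    intro l
    by_cases hl : l.length = m
    swap
    · exact ⟨id, fun h => absurd h hl⟩
    -- transported data
    set Al : Set Cantor := {c | trans [] l c ∈ A} with hAl
    set Bl : Set Cantor := {c | trans [] l c ∈ B} with hBl
    have hclAl : IsClosed Al := hA.preimage (trans_continuous [] l)
    have hclBl : IsClosed Bl := hB.preimage (trans_continuous [] l)
    -- membership in Cyl l transfer
    have hCylA : ∀ a ∈ A, a ∈ Cyl l → trans [] l (trans l [] a) = a := fun a _ h => trans_trans h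
    -- nwd transfer
    have hnwd_transfer : ∀ (C : Set Cantor), (∀ t : List Bool, ¬ Cyl t ⊆ C) →
        ∀ t : List Bool, ¬ Cyl t ⊆ {c | trans [] l c ∈ C} := by
      intro C hC t hsub
      apply hC (l ++ t)
      intro c hc
      have hcl : c ∈ Cyl l := by
        intro k hk
        have := hc k (by simp; omega)
        rwa [List.getD_append _ _ _ _ hk] at this
      have hproj : trans l [] c ∈ Cyl t := by
        intro k hk
        rw [trans_proj_apply]
        have := hc (k + l.length) (by simp; omega)
        rwa [List.getD_append_right _ _ _ _ (by omega), Nat.add_sub_cancel] at this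
      have := hsub hproj
      rw [Set.mem_setOf_eq, trans_trans hcl] at this
      exact this
    have hnwdAl : ∀ t : List Bool, ¬ Cyl t ⊆ Al := hnwd_transfer A ((nwd_iff hA).1 hAnwd)
    have hnwdBl : ∀ t : List Bool, ¬ Cyl t ⊆ Bl := hnwd_transfer B ((nwd_iff hB).1 hBnwd)
    -- the transported maps
    set el : Cantor → Cantor := fun c => trans l [] (e (trans [] l c)) with hel
    set el' : Cantor → Cantor := fun c => trans l [] (e' (trans [] l c)) with hel'
    -- image of e on A ∩ Cyl l stays in Cyl l
    have hePrefix : ∀ a ∈ A, a ∈ Cyl l → e a ∈ Cyl l := by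
      intro a ha hal
      apply mem_Cyl_of_agr hal
      have := hagr a ha
      rw [hl]
      exact fun k hk => (this k hk)
    have he'Prefix : ∀ b ∈ B, b ∈ Cyl l → e' b ∈ Cyl l := by
      intro b hb hbl
      have hb' : e' b ∈ A := hBA b hb
      have := hagr (e' b) hb'
      rw [h2 b hb] at this
      apply mem_Cyl_of_agr hbl
      rw [hl]
      exact fun k hk => (this k hk).symm
    have hABl : ∀ a ∈ Al, el a ∈ Bl := by
      intro a₀ ha₀
      have ha : trans [] l a₀ ∈ A := ha₀
      have hmem : e (trans [] l a₀) ∈ Cyl l := hePrefix _ ha (trans_nil_mem_Cyl l a₀)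
      show trans [] l (trans l [] (e (trans [] l a₀))) ∈ B
      rw [trans_trans hmem]
      exact hAB _ ha
    have hBAl : ∀ b ∈ Bl, el' b ∈ Al := by
      intro b₀ hb₀
      have hb : trans [] l b₀ ∈ B := hb₀
      have hmem : e' (trans [] l b₀) ∈ Cyl l := he'Prefix _ hb (trans_nil_mem_Cyl l b₀)
      show trans [] l (trans l [] (e' (trans [] l b₀))) ∈ A
      rw [trans_trans hmem]
      exact hBA _ hb
    have hinv1l : ∀ a ∈ Al, el' (el a) = a := by
      intro a₀ ha₀
      have ha : trans [] l a₀ ∈ A := ha₀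
      have hmem : e (trans [] l a₀) ∈ Cyl l := hePrefix _ ha (trans_nil_mem_Cyl l a₀)
      show trans l [] (e' (trans [] l (trans l [] (e (trans [] l a₀))))) = a₀
      rw [trans_trans hmem, h1 _ ha, trans_trans (mem_Cyl_nil a₀)]
    have hinv2l : ∀ b ∈ Bl, el (el' b) = b := by
      intro b₀ hb₀
      have hb : trans [] l b₀ ∈ B := hb₀
      have hmem : e' (trans [] l b₀) ∈ Cyl l := he'Prefix _ hb (trans_nil_mem_Cyl l b₀)
      show trans l [] (e (trans [] l (trans l [] (e' (trans [] l b₀))))) = b₀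
      rw [trans_trans hmem, h2 _ hb, trans_trans (mem_Cyl_nil b₀)]
    have hcontl : ContinuousOn el Al := by
      have hmt : Set.MapsTo (trans [] l) Al A := fun c hc => hc
      have h1c : ContinuousOn (e ∘ trans [] l) Al :=
        he.comp (trans_continuous [] l).continuousOn hmt
      exact (trans_continuous l []).comp_continuousOn h1c
    obtain ⟨Hl, hc1, hc2, hc3⟩ := KRext Al Bl hclAl hclBl
      ((nwd_iff hclAl).2 hnwdAl) ((nwd_iff hclBl).2 hnwdBl) el el' hcontl hABl hBAl hinv1l hinv2l
    exact ⟨Hl, fun _ => ⟨hc1, hc2, hc3⟩⟩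
  choose HL hHL using key
  -- glue
  set H : Cantor → Cantor :=
    fun c => trans [] (take m c) (HL (take m c) (trans (take m c) [] c)) with hHdef
  have take_len : ∀ c : Cantor, (take m c).length = m := fun c => take_length m c
  have Hprefix : ∀ c, Agr m (H c) c := by
    intro c
    have : H c ∈ Cyl (take m c) := trans_nil_mem_Cyl _ _
    have h := mem_Cyl_take.1 this
    exact h.mono le_rfl
  -- recovering a point of a cylinder from prefix and projection
  have recover : ∀ (c : Cantor), trans [] (take m c) (trans (take m c) [] c) = c := by
    intro c
    exact trans_trans (self_mem_Cyl_take m c)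
  have Hext : ∀ a ∈ A, H a = e a := by
    intro a ha
    have hmem : trans [] (take m a) (trans (take m a) [] a) ∈ A := by rw [recover]; exact ha
    rw [hHdef]
    simp only []
    rw [(hHL (take m a) (take_len a)).2.2 _ hmem, recover]
    have heCyl : e a ∈ Cyl (take m a) := by
      apply mem_Cyl_of_agr (self_mem_Cyl_take m a)
      rw [take_len]
      exact hagr a ha
    exact trans_trans heCyl
  have Hinj : Function.Injective H := by
    intro c c' hcc
    have hpre : Agr m c c' := ((Hprefix c).symm.trans (hcc ▸ Hprefix c'))
    have htake : take m c = take m c' := by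
      apply List.ext_getElem (by simp)
      intro k h1 h2
      simp only [take, List.getElem_ofFn]
      exact hpre k (by simpa using h1)
    rw [hHdef] at hcc
    simp only [htake] at hcc
    have hinj1 : Function.Injective (trans ([] : List Bool) (take m c')) := by
      intro x y hxy
      have hxy2 := congrArg (trans (take m c') []) hxy
      rwa [trans_trans (mem_Cyl_nil x), trans_trans (mem_Cyl_nil y)] at hxy2
    have h4 := (hHL (take m c') (take_len c')).2.1.1 (hinj1 hcc)
    funext k
    by_cases hk : k < m
    · exact hpre k hk
    · have h5 := congrFun h4 (k - m)
      rw [trans_proj_apply, trans_proj_apply, take_len] at h5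
      rwa [Nat.sub_add_cancel (le_of_not_gt hk)] at h5
  have Hsurj : Function.Surjective H := by
    intro d
    obtain ⟨y, hy⟩ := (hHL (take m d) (take_len d)).2.1.2 (trans (take m d) [] d)
    refine ⟨trans [] (take m d) y, ?_⟩
    have htake : take m (trans [] (take m d) y) = take m d := by
      have hmem : trans [] (take m d) y ∈ Cyl (take m d) := trans_nil_mem_Cyl _ y
      have h6 := take_eq_of_mem_Cyl hmem
      rwa [take_len d] at h6
    rw [hHdef]
    simp only [htake]
    rw [trans_trans (mem_Cyl_nil y), hy, recover]
  have hcont : Continuous H := by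
    rw [continuous_iff_continuousAt]
    intro c
    have key2 : ∀ c' ∈ Cyl (take m c),
        H c' = trans [] (take m c) (HL (take m c) (trans (take m c) [] c')) := by
      intro c' hc'
      have htake : take m c' = take m c := by
        apply List.ext_getElem (by simp)
        intro k h1 h2
        simp only [take, List.getElem_ofFn]
        exact (mem_Cyl_take.1 hc') k (by simpa using h1)
      rw [hHdef]
      simp only [htake]
    have hcont2 : Continuous fun c' =>
        trans [] (take m c) (HL (take m c) (trans (take m c) [] c')) :=
      (trans_continuous [] (take m c)).comp
        (((hHL (take m c) (take_len c)).1).comp (trans_continuous (take m c) []))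
    apply ContinuousAt.congr hcont2.continuousAt
    apply Filter.eventuallyEq_of_mem ((isOpen_Cyl (take m c)).mem_nhds (self_mem_Cyl_take m c))
    intro c' hc'
    exact (key2 c' hc').symm
  let Eq0 : Cantor ≃ Cantor := Equiv.ofBijective H ⟨Hinj, Hsurj⟩
  let Ht : Cantor ≃ₜ Cantor := Continuous.homeoOfEquivCompactToT2 (f := Eq0) hcont
  refine ⟨Ht, fun a ha => Hext a ha, fun c => ⟨Hprefix c, ?_⟩⟩
  have h7 := Hprefix (Ht.symm c)
  have h8 : H (Ht.symm c) = c := Ht.apply_symm_apply c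
  rw [h8] at h7
  exact h7.symm

end KR

namespace KR

lemma continuous_of_locally_constant {X Z : Type*} [TopologicalSpace X] [TopologicalSpace Z]
    {f : X → Z} (h : ∀ x : X, ∃ U : Set X, IsOpen U ∧ x ∈ U ∧ ∀ y ∈ U, f y = f x) :
    Continuous f := by
  rw [continuous_iff_continuousAt]
  intro x
  obtain ⟨U, hU, hxU, hconst⟩ := h x
  have : f =ᶠ[nhds x] (fun _ => f x) := by
    apply Filter.eventuallyEq_of_mem (hU.mem_nhds hxU)
    intro y hy
    exact hconst y hy
  exact ContinuousAt.congr continuousAt_const this.symm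

/-- one locally-constant choice from a pointwise-assigned open cover -/
lemma cov_choice {X Z : Type*} [TopologicalSpace X] [TopologicalSpace Z] (hX : CovDimZero X)
    (U : X → Set X) (hUo : ∀ x, IsOpen (U x)) (hUx : ∀ x, x ∈ U x) (z : X → Z) :
    ∃ t : X → Z, Continuous t ∧ ∀ x : X, ∃ w : X, x ∈ U w ∧ t x = z w := by
  classical
  rcases isEmpty_or_nonempty X with hX0 | hX0
  · refine ⟨fun x => (IsEmpty.false x).elim, ?_, fun x => (IsEmpty.false x).elim⟩
    rw [continuous_iff_continuousAt]
    intro x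
    exact (IsEmpty.false x).elim
  set 𝒰 : Set (Set X) := {u | ∃ x, u = U x} with h𝒰
  obtain ⟨𝒱, hVo, hVcov, hVref, hVdisj⟩ := hX 𝒰
    (by rintro u ⟨x, rfl⟩; exact hUo x)
    (by
      rw [Set.eq_univ_iff_forall]
      intro x
      exact ⟨U x, ⟨x, rfl⟩, hUx x⟩)
  -- the piece containing x
  have hv : ∀ x : X, ∃ v, v ∈ 𝒱 ∧ x ∈ v := by
    intro x
    have : x ∈ ⋃₀ 𝒱 := by rw [hVcov]; trivial
    obtain ⟨v, hv1, hv2⟩ := this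
    exact ⟨v, hv1, hv2⟩
  choose V hV1 hV2 using hv
  have hVuniq : ∀ x : X, ∀ v ∈ 𝒱, x ∈ v → v = V x := by
    intro x v hvV hxv
    by_contra hne
    have := hVdisj hvV (hV1 x) hne
    exact Set.disjoint_left.1 this hxv (hV2 x)
  -- source point for each refinement piece
  have hsrc : ∀ v : Set X, ∃ w : X, v ∈ 𝒱 → v ⊆ U w := by
    intro v
    by_cases hvV : v ∈ 𝒱
    · obtain ⟨u, hu𝒰, hvu⟩ := hVref v hvV
      obtain ⟨w, rfl⟩ := hu𝒰
      exact ⟨w, fun _ => hvu⟩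
    · exact ⟨Classical.arbitrary _, fun h => absurd h hvV⟩
  choose xv hxv using hsrc
  refine ⟨fun x => z (xv (V x)), ?_, ?_⟩
  · apply continuous_of_locally_constant
    intro x
    refine ⟨V x, hVo _ (hV1 x), hV2 x, fun y hy => ?_⟩
    have : V x = V y := hVuniq y (V x) (hV1 x) hy
    rw [this]
  · intro x
    exact ⟨xv (V x), hxv (V x) (hV1 x) (hV2 x), rfl⟩

end KR

namespace KR

/-- Michael's zero-dimensional selection theorem. -/
theorem selection {X : Type*} [TopologicalSpace X] (hX : CovDimZero X)
    {Z : Type*} [MetricSpace Z] [CompleteSpace Z]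
    (Φ : X → Set Z) (hne : ∀ x, (Φ x).Nonempty) (hcl : ∀ x, IsClosed (Φ x))
    (lsc : ∀ x : X, ∀ z ∈ Φ x, ∀ ε : ℝ, 0 < ε → ∃ U : Set X, IsOpen U ∧ x ∈ U ∧
      ∀ x' ∈ U, ∃ z' ∈ Φ x', dist z z' < ε) :
    ∃ s : X → Z, Continuous s ∧ ∀ x, s x ∈ Φ x := by
  classical
  -- the base approximation
  have base : ∃ t : X → Z, Continuous t ∧ ∀ x, ∃ z ∈ Φ x, dist (t x) z < (1/2 : ℝ)^0 := by
    have hU : ∀ x : X, ∃ U : Set X, IsOpen U ∧ x ∈ U ∧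
        ∀ x' ∈ U, ∃ z' ∈ Φ x', dist ((hne x).choose) z' < 1 :=
      fun x => lsc x _ (hne x).choose_spec 1 one_pos
    choose U hUo hUx hUp using hU
    obtain ⟨t, ht, htp⟩ := cov_choice hX U hUo hUx (fun x => (hne x).choose)
    refine ⟨t, ht, fun x => ?_⟩
    obtain ⟨w, hw1, hw2⟩ := htp x
    obtain ⟨z', hz1, hz2⟩ := hUp w x hw1
    exact ⟨z', hz1, by rw [hw2]; simpa using hz2⟩
  -- the improvement step
  have step : ∀ (n : ℕ) (t : X → Z), Continuous t →
      (∀ x, ∃ z ∈ Φ x, dist (t x) z < (1/2 : ℝ)^n) →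
      ∃ t' : X → Z, (Continuous t' ∧ ∀ x, ∃ z ∈ Φ x, dist (t' x) z < (1/2 : ℝ)^(n+1)) ∧
        ∀ x, dist (t' x) (t x) < (1/2 : ℝ)^n + (1/2 : ℝ)^(n+1) := by
    intro n t ht htp
    have hz : ∀ x : X, ∃ z ∈ Φ x, dist (t x) z < (1/2 : ℝ)^n := htp
    choose zx hzx1 hzx2 using hz
    have hU : ∀ x : X, ∃ U : Set X, IsOpen U ∧ x ∈ U ∧
        ∀ x' ∈ U, ∃ z' ∈ Φ x', dist (zx x) z' < (1/2 : ℝ)^(n+1) :=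
      fun x => lsc x _ (hzx1 x) _ (by positivity)
    choose U1 hU1o hU1x hU1p using hU
    set U : X → Set X := fun x => U1 x ∩ t ⁻¹' (Metric.ball (t x) ((1/2 : ℝ)^(n+1))) with hUdef
    have hUo : ∀ x, IsOpen (U x) := fun x =>
      (hU1o x).inter ((Metric.isOpen_ball).preimage ht)
    have hUx : ∀ x, x ∈ U x := fun x =>
      ⟨hU1x x, by simp only [Set.mem_preimage, Metric.mem_ball, dist_self]; positivity⟩
    obtain ⟨t', ht', ht'p⟩ := cov_choice hX U hUo hUx zx
    refine ⟨t', ⟨ht', fun x => ?_⟩, fun x => ?_⟩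
    · obtain ⟨w, hw1, hw2⟩ := ht'p x
      obtain ⟨z', hz1, hz2⟩ := hU1p w x hw1.1
      exact ⟨z', hz1, by rw [hw2]; exact hz2⟩
    · obtain ⟨w, hw1, hw2⟩ := ht'p x
      have h1 : dist (t x) (t w) < (1/2 : ℝ)^(n+1) := hw1.2
      have h2 : dist (t w) (zx w) < (1/2 : ℝ)^n := hzx2 w
      calc dist (t' x) (t x) ≤ dist (t' x) (t w) + dist (t w) (t x) := dist_triangle _ _ _
        _ = dist (zx w) (t w) + dist (t w) (t x) := by rw [hw2]
        _ < (1/2 : ℝ)^n + (1/2 : ℝ)^(n+1) := by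
            rw [dist_comm (zx w) (t w), dist_comm (t w) (t x)]
            exact add_lt_add h2 h1
  -- iterate
  let Sub : ℕ → Type _ := fun n =>
    {t : X → Z // Continuous t ∧ ∀ x, ∃ z ∈ Φ x, dist (t x) z < (1/2 : ℝ)^n}
  let seq : ∀ n : ℕ, Sub n := fun n =>
    Nat.rec (motive := Sub)
      ⟨base.choose, base.choose_spec⟩
      (fun n prev =>
        ⟨(step n prev.1 prev.2.1 prev.2.2).choose,
          (step n prev.1 prev.2.1 prev.2.2).choose_spec.1⟩) n
  have seq_succ : ∀ n, (seq (n+1)).1 =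
      (step n (seq n).1 (seq n).2.1 (seq n).2.2).choose := fun n => rfl
  have seqdist : ∀ n x, dist ((seq (n+1)).1 x) ((seq n).1 x) <
      (1/2 : ℝ)^n + (1/2 : ℝ)^(n+1) := by
    intro n x
    rw [seq_succ n]
    exact (step n (seq n).1 (seq n).2.1 (seq n).2.2).choose_spec.2 x
  have hgeom : ∀ x : X, ∀ n : ℕ,
      dist ((seq n).1 x) ((seq (n+1)).1 x) ≤ 2 * (1/2 : ℝ)^n := by
    intro x n
    rw [dist_comm]
    have := (seqdist n x).le
    have h2 : (1/2 : ℝ)^(n+1) ≤ (1/2 : ℝ)^n := by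
      apply pow_le_pow_of_le_one (by norm_num) (by norm_num) (by omega)
    nlinarith
  have hcauchy : ∀ x : X, CauchySeq (fun n => (seq n).1 x) := by
    intro x
    exact cauchySeq_of_le_geometric (1/2 : ℝ) 2 (by norm_num) (hgeom x)
  have hlim : ∀ x : X, ∃ a : Z, Filter.Tendsto (fun n => (seq n).1 x) Filter.atTop (nhds a) :=
    fun x => cauchySeq_tendsto_of_complete (hcauchy x)
  choose s hs using hlim
  have hbound : ∀ x n, dist ((seq n).1 x) (s x) ≤ 2 * (1/2 : ℝ)^n / (1 - 1/2) := by
    intro x n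
    exact dist_le_of_le_geometric_of_tendsto (1/2 : ℝ) 2 (by norm_num) (hgeom x) (hs x) n
  have hbound' : ∀ x n, dist ((seq n).1 x) (s x) ≤ 4 * (1/2 : ℝ)^n := by
    intro x n
    have := hbound x n
    calc dist ((seq n).1 x) (s x) ≤ 2 * (1/2 : ℝ)^n / (1 - 1/2) := this
      _ = 4 * (1/2 : ℝ)^n := by ring
  -- uniform convergence gives continuity
  have huc : TendstoUniformly (fun n x => (seq n).1 x) s Filter.atTop := by
    rw [Metric.tendstoUniformly_iff]
    intro ε hε
    obtain ⟨N, hN⟩ : ∃ N : ℕ, 4 * (1/2 : ℝ)^N < ε := by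
      obtain ⟨N, hN⟩ := exists_pow_lt_of_lt_one (show (0:ℝ) < ε/4 by positivity)
        (show (1/2 : ℝ) < 1 by norm_num)
      exact ⟨N, by linarith⟩
    rw [Filter.eventually_atTop]
    refine ⟨N, fun n hn x => ?_⟩
    have h1 := hbound' x n
    have h2 : (1/2 : ℝ)^n ≤ (1/2 : ℝ)^N :=
      pow_le_pow_of_le_one (by norm_num) (by norm_num) hn
    rw [dist_comm]
    calc dist ((seq n).1 x) (s x) ≤ 4 * (1/2:ℝ)^n := h1
      _ ≤ 4 * (1/2:ℝ)^N := by linarith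
      _ < ε := hN
  have hscont : Continuous s :=
    huc.continuous (Filter.Eventually.of_forall (fun n => (seq n).2.1)).frequently
  refine ⟨s, hscont, fun x => ?_⟩
  have : s x ∈ closure (Φ x) := by
    rw [Metric.mem_closure_iff]
    intro ε hε
    obtain ⟨N, hN⟩ : ∃ N : ℕ, 5 * (1/2 : ℝ)^N < ε := by
      obtain ⟨N, hN⟩ := exists_pow_lt_of_lt_one (show (0:ℝ) < ε/5 by positivity)
        (show (1/2 : ℝ) < 1 by norm_num)
      exact ⟨N, by linarith⟩
    obtain ⟨z, hz1, hz2⟩ := (seq N).2.2 x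
    refine ⟨z, hz1, ?_⟩
    have h1 := hbound' x N
    calc dist (s x) z ≤ dist (s x) ((seq N).1 x) + dist ((seq N).1 x) z := dist_triangle _ _ _
      _ < 4 * (1/2:ℝ)^N + (1/2:ℝ)^N := by
          rw [dist_comm (s x)]
          exact add_lt_add_of_le_of_lt h1 hz2
      _ = 5 * (1/2:ℝ)^N := by ring
      _ < ε := hN
  rwa [(hcl x).closure_eq] at this

end KR


namespace KR

lemma nwd_image_homeo (φ : Cantor ≃ₜ Cantor) {A : Set Cantor} (hA : IsClosed A)
    (h : IsNowhereDense A) : IsNowhereDense (φ '' A) := by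
  have hcl : IsClosed (φ '' A) := (Homeomorph.isClosedMap φ) _ hA
  rw [nwd_iff hcl]
  intro l hl
  obtain ⟨c, hc⟩ := Cyl_nonempty l
  have hpre : φ.symm c ∈ φ ⁻¹' Cyl l := by simp [Set.mem_preimage, Homeomorph.apply_symm_apply, hc]
  obtain ⟨n, hn⟩ := exists_Cyl_subset ((isOpen_Cyl l).preimage φ.continuous) hpre
  have hsub : Cyl (take n (φ.symm c)) ⊆ A := by
    intro d hd
    have h1 : φ d ∈ Cyl l := hn hd
    have h2 : φ d ∈ φ '' A := hl h1
    obtain ⟨a, ha, haeq⟩ := h2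
    rwa [← φ.injective haeq]
  exact (nwd_iff hA).1 h _ hsub

end KR

@[reducible] noncomputable def cantorMetric : MetricSpace Cantor :=
  PiNat.metricSpaceOfDiscreteUniformity (fun _ => rfl)

attribute [local instance] cantorMetric

namespace KR

lemma dist_le_of_agr {n : ℕ} {c d : Cantor} (h : Agr n c d) : dist c d ≤ (1/2 : ℝ)^n := by
  have : c ∈ PiNat.cylinder d n := fun i hi => h i hi
  rwa [← PiNat.mem_cylinder_iff_dist_le]

end KR

open KR

theorem fiberwise_extension_lemma
    (X Y : Type*) [TopologicalSpace X] [TopologicalSpace Y]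
    [T2Space X] [T2Space Y] [ParacompactSpace X] [ParacompactSpace Y]
    (hX : CovDimZero X) (hY : CovDimZero Y)
    (P' : Set (X × Cantor)) (K' : Set (Y × Cantor))
    (hP' : IsClosed P') (hK' : IsClosed K')
    (hPsurj : Prod.fst '' P' = Set.univ) (hKsurj : Prod.fst '' K' = Set.univ)
    (hPfib : ∀ x : X, IsNowhereDense {c : Cantor | (x, c) ∈ P'})
    (hKfib : ∀ y : Y, IsNowhereDense {c : Cantor | (y, c) ∈ K'})
    (f : P' ≃ₜ K') (g : X ≃ₜ Y)
    (hcomm : ∀ p : P', ((f p : Y × Cantor)).1 = g ((p : X × Cantor)).1) :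
    ∃ F : (X × Cantor) ≃ₜ (Y × Cantor),
      (∀ p : P', F (p : X × Cantor) = (f p : Y × Cantor)) ∧
      ∀ z : X × Cantor, (F z).1 = g z.1 := by
  classical
  -- fibers
  set A : X → Set Cantor := fun x => {c | (x, c) ∈ P'} with hAdef
  set B : Y → Set Cantor := fun y => {c | (y, c) ∈ K'} with hBdef
  have hAcl : ∀ x, IsClosed (A x) := fun x => hP'.preimage (Continuous.prodMk_right x)
  have hBcl : ∀ y, IsClosed (B y) := fun y => hK'.preimage (Continuous.prodMk_right y)
  -- fiberwise maps
  set ef : X → Cantor → Cantor := fun x c =>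
    if h : (x, c) ∈ P' then ((f ⟨(x, c), h⟩ : Y × Cantor)).2 else c with hefdef
  set ef' : X → Cantor → Cantor := fun x d =>
    if h : (g x, d) ∈ K' then ((f.symm ⟨(g x, d), h⟩ : X × Cantor)).2 else d with hef'def
  have hcomm' : ∀ q : K', ((f.symm q : X × Cantor)).1 = g.symm ((q : Y × Cantor)).1 := by
    intro q
    have h1 := hcomm (f.symm q)
    rw [f.apply_symm_apply] at h1
    have h2 := congrArg g.symm h1
    rw [g.symm_apply_apply] at h2
    exact h2.symm
  have hefP : ∀ x c (h : (x, c) ∈ P'), ef x c = ((f ⟨(x, c), h⟩ : Y × Cantor)).2 :=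
    fun x c h => dif_pos h
  have hfpair : ∀ x c (h : (x, c) ∈ P'), (f ⟨(x, c), h⟩ : Y × Cantor) = (g x, ef x c) := by
    intro x c h
    rw [hefP x c h]
    exact Prod.ext (hcomm ⟨(x, c), h⟩) rfl
  have hmapsAB : ∀ x, ∀ c ∈ A x, ef x c ∈ B (g x) := by
    intro x c h
    show (g x, ef x c) ∈ K'
    rw [← hfpair x c h]
    exact (f ⟨(x, c), h⟩).2
  have hef'K : ∀ x d (h : (g x, d) ∈ K'), ef' x d = ((f.symm ⟨(g x, d), h⟩ : X × Cantor)).2 :=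
    fun x d h => dif_pos h
  have hf'pair : ∀ x d (h : (g x, d) ∈ K'),
      (f.symm ⟨(g x, d), h⟩ : X × Cantor) = (x, ef' x d) := by
    intro x d h
    rw [hef'K x d h]
    refine Prod.ext ?_ rfl
    have h3 := hcomm' ⟨(g x, d), h⟩
    simpa using h3
  have hmapsBA : ∀ x, ∀ d ∈ B (g x), ef' x d ∈ A x := by
    intro x d h
    show (x, ef' x d) ∈ P'
    rw [← hf'pair x d h]
    exact (f.symm ⟨(g x, d), h⟩).2
  have hinv1 : ∀ x, ∀ c ∈ A x, ef' x (ef x c) = c := by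
    intro x c h
    have hKm : (g x, ef x c) ∈ K' := hmapsAB x c h
    have h2 : (⟨(g x, ef x c), hKm⟩ : K') = f ⟨(x, c), h⟩ := Subtype.ext (hfpair x c h).symm
    have h3 := hf'pair x (ef x c) hKm
    rw [h2, f.symm_apply_apply] at h3
    have h4 := congrArg Prod.snd h3
    simpa using h4.symm
  have hinv2 : ∀ x, ∀ d ∈ B (g x), ef x (ef' x d) = d := by
    intro x d h
    have hPm : (x, ef' x d) ∈ P' := hmapsBA x d h
    have h2 : (⟨(x, ef' x d), hPm⟩ : P') = f.symm ⟨(g x, d), h⟩ := Subtype.ext (hf'pair x d h).symm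
    have h3 := hfpair x (ef' x d) hPm
    rw [h2, f.apply_symm_apply] at h3
    have h4 := congrArg Prod.snd h3
    simpa using h4.symm
  have hcontA : ∀ x, ContinuousOn (ef x) (A x) := by
    intro x
    rw [continuousOn_iff_continuous_restrict]
    have hc : Continuous (fun c : ↥(A x) => ((f ⟨(x, c.1), c.2⟩ : Y × Cantor)).2) := by
      apply continuous_snd.comp
      apply continuous_subtype_val.comp
      apply f.continuous.comp
      exact Continuous.subtype_mk (continuous_const.prodMk continuous_subtype_val) _
    apply hc.congr
    intro c
    exact (hefP x c.1 c.2).symm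
  -- the multivalued map of fiberwise extensions
  set Z := C(Cantor, Cantor) × C(Cantor, Cantor) with hZdef
  set Φ : X → Set Z := fun x =>
    {z | (∀ c, z.1 (z.2 c) = c) ∧ (∀ c, z.2 (z.1 c) = c) ∧ ∀ c ∈ A x, z.1 c = ef x c}
    with hΦdef
  have hΦne : ∀ x, (Φ x).Nonempty := by
    intro x
    obtain ⟨H, hH1, -⟩ := KRlevel (A x) (B (g x)) (hAcl x) (hBcl (g x)) (hPfib x) (hKfib (g x))
      (ef x) (ef' x) (hcontA x) (hmapsAB x) (hmapsBA x) (hinv1 x) (hinv2 x) 0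
      (fun a _ k hk => absurd hk (Nat.not_lt_zero k))
    exact ⟨(⟨H, H.continuous⟩, ⟨H.symm, H.symm.continuous⟩),
      fun c => H.apply_symm_apply c, fun c => H.symm_apply_apply c, hH1⟩
  have hΦcl : ∀ x, IsClosed (Φ x) := by
    intro x
    have h1 : ∀ c : Cantor, IsClosed {z : Z | z.1 (z.2 c) = c} := by
      intro c
      have hc : Continuous (fun z : Z => z.1 (z.2 c)) := by
        have h2 : Continuous (fun z : Z => ((z.1 : C(Cantor, Cantor)), z.2 c)) :=
          continuous_fst.prodMk ((continuous_eval_const c).comp continuous_snd)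
        exact continuous_eval.comp h2
      exact isClosed_eq hc continuous_const
    have h2 : ∀ c : Cantor, IsClosed {z : Z | z.2 (z.1 c) = c} := by
      intro c
      have hc : Continuous (fun z : Z => z.2 (z.1 c)) := by
        have h3 : Continuous (fun z : Z => ((z.2 : C(Cantor, Cantor)), z.1 c)) :=
          continuous_snd.prodMk ((continuous_eval_const c).comp continuous_fst)
        exact continuous_eval.comp h3
      exact isClosed_eq hc continuous_const
    have h3 : ∀ c : Cantor, IsClosed {z : Z | c ∈ A x → z.1 c = ef x c} := by
      intro c
      by_cases hc : c ∈ A x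
      · have : {z : Z | c ∈ A x → z.1 c = ef x c} = {z : Z | z.1 c = ef x c} := by
          ext z; simp [hc]
        rw [this]
        exact isClosed_eq ((continuous_eval_const c).comp continuous_fst)
          continuous_const
      · have : {z : Z | c ∈ A x → z.1 c = ef x c} = Set.univ := by
          ext z; simp [hc]
        rw [this]
        exact isClosed_univ
    have heq : Φ x = (⋂ c, {z : Z | z.1 (z.2 c) = c}) ∩ ((⋂ c, {z : Z | z.2 (z.1 c) = c}) ∩
        (⋂ c, {z : Z | c ∈ A x → z.1 c = ef x c})) := by
      ext z
      simp only [hΦdef, Set.mem_setOf_eq, Set.mem_inter_iff, Set.mem_iInter]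
    rw [heq]
    exact (isClosed_iInter h1).inter ((isClosed_iInter h2).inter (isClosed_iInter h3))
  have hΦlsc : ∀ x : X, ∀ z ∈ Φ x, ∀ ε : ℝ, 0 < ε → ∃ U : Set X, IsOpen U ∧ x ∈ U ∧
      ∀ x' ∈ U, ∃ z' ∈ Φ x', dist z z' < ε := by
    intro x z hz ε hε
    obtain ⟨hz1, hz2, hz3⟩ := hz
    set u : C(Cantor, Cantor) := z.1 with hudef
    set v : C(Cantor, Cantor) := z.2 with hvdef
    obtain ⟨m, hm⟩ := exists_pow_lt_of_lt_one hε (show (1/2 : ℝ) < 1 by norm_num)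
    obtain ⟨M₀, hM₀⟩ := unif_cont u.continuous m
    set M := M₀ + m + 1 with hMdef
    -- the tube
    set T' : Set P' := {p | ¬ Agr M (v ((f p : Y × Cantor)).2) ((p : X × Cantor)).2} with hT'def
    have hT'cl : IsClosed T' := by
      have hopen : IsOpen {p : P' | Agr M (v ((f p : Y × Cantor)).2) ((p : X × Cantor)).2} := by
        have heq2 : {p : P' | Agr M (v ((f p : Y × Cantor)).2) ((p : X × Cantor)).2} =
            ⋂ k ∈ Finset.range M,
              {p : P' | v ((f p : Y × Cantor)).2 k = ((p : X × Cantor)).2 k} := by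
          ext p
          simp [Agr]
        rw [heq2]
        apply isOpen_biInter_finset
        intro k _
        have hc1 : Continuous fun p : P' => v ((f p : Y × Cantor)).2 k :=
          (continuous_apply k).comp (v.continuous.comp (continuous_snd.comp
            (continuous_subtype_val.comp f.continuous)))
        have hc2 : Continuous fun p : P' => ((p : X × Cantor)).2 k :=
          (continuous_apply k).comp (continuous_snd.comp continuous_subtype_val)
        have heq3 : {p : P' | v ((f p : Y × Cantor)).2 k = ((p : X × Cantor)).2 k} =
            (fun p : P' => (v ((f p : Y × Cantor)).2 k, ((p : X × Cantor)).2 k)) ⁻¹'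
              {q : Bool × Bool | q.1 = q.2} := by
          ext p; simp
        rw [heq3]
        exact (isOpen_discrete _).preimage (hc1.prodMk hc2)
      have : T' = {p : P' | Agr M (v ((f p : Y × Cantor)).2) ((p : X × Cantor)).2}ᶜ := by
        ext p; simp [hT'def]
      rw [this]
      exact hopen.isClosed_compl
    have hT'x : ∀ p : P', ((p : X × Cantor)).1 = x → p ∉ T' := by
      intro p hp1 hpT
      apply hpT
      clear hpT
      have hpmem : ((x, ((p : X × Cantor)).2) : X × Cantor) ∈ P' := by
        rw [← hp1]
        exact p.2
      have hpeq : p = ⟨(x, ((p : X × Cantor)).2), hpmem⟩ := Subtype.ext (Prod.ext hp1 rfl)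
      rw [hpeq]
      show Agr M (v ((f ⟨(x, ((p : X × Cantor)).2), hpmem⟩ : Y × Cantor)).2) ((p : X × Cantor)).2
      rw [← hefP x _ hpmem, ← hz3 _ hpmem, hz2]
      exact fun k _ => rfl
    have hTcl : IsClosed (Subtype.val '' T' : Set (X × Cantor)) :=
      hP'.isClosedEmbedding_subtypeVal.isClosedMap _ hT'cl
    have hdisj : ({x} ×ˢ (Set.univ : Set Cantor)) ⊆ (Subtype.val '' T')ᶜ := by
      rintro ⟨a, c⟩ ⟨rfl, -⟩
      rintro ⟨p, hpT, hpv⟩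
      exact hT'x p (by rw [hpv]) hpT
    obtain ⟨U, W, hU, hW, hxU, hWu, hsub⟩ := generalized_tube_lemma isCompact_singleton
      (isCompact_univ : IsCompact (Set.univ : Set Cantor)) hTcl.isOpen_compl hdisj
    refine ⟨U, hU, hxU rfl, ?_⟩
    intro x' hx'
    have htube : ∀ c ∈ A x', Agr M (v (ef x' c)) c := by
      intro c hc
      by_contra hagr
      have hmem : ((x', c) : X × Cantor) ∈ Subtype.val '' T' := by
        refine ⟨⟨(x', c), hc⟩, ?_, rfl⟩
        show ¬ Agr M (v ((f ⟨(x', c), hc⟩ : Y × Cantor)).2) c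
        rwa [← hefP x' c hc]
      exact hsub ⟨hx', hWu (Set.mem_univ c)⟩ hmem
    -- build the approximate extension at x'
    set vH : Cantor ≃ₜ Cantor :=
      Continuous.homeoOfEquivCompactToT2 (f := ⟨v, u, hz1, hz2⟩) v.continuous with hvHdef
    have hvH : ∀ c, vH c = v c := fun c => rfl
    set B2 : Set Cantor := vH '' (B (g x')) with hB2def
    have hB2cl : IsClosed B2 := (Homeomorph.isClosedMap vH) _ (hBcl (g x'))
    have hB2nwd : IsNowhereDense B2 := nwd_image_homeo vH (hBcl (g x')) (hKfib (g x'))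
    set ψ : Cantor → Cantor := fun c => v (ef x' c) with hψdef
    set ψ' : Cantor → Cantor := fun d => ef' x' (u d) with hψ'def
    have hψAB : ∀ c ∈ A x', ψ c ∈ B2 := fun c hc => ⟨ef x' c, hmapsAB x' c hc, rfl⟩
    have hψBA : ∀ d ∈ B2, ψ' d ∈ A x' := by
      rintro d ⟨b, hb, rfl⟩
      show ef' x' (u (vH b)) ∈ A x'
      rw [hvH, hz1]
      exact hmapsBA x' b hb
    have hψ1 : ∀ c ∈ A x', ψ' (ψ c) = c := by
      intro c hc
      show ef' x' (u (v (ef x' c))) = c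
      rw [hz1]
      exact hinv1 x' c hc
    have hψ2 : ∀ d ∈ B2, ψ (ψ' d) = d := by
      rintro d ⟨b, hb, rfl⟩
      show v (ef x' (ef' x' (u (vH b)))) = vH b
      rw [hvH, hz1, hinv2 x' b hb]
    have hψcont : ContinuousOn ψ (A x') := v.continuous.comp_continuousOn (hcontA x')
    obtain ⟨H, hHext, hHagr⟩ := KRlevel (A x') B2 (hAcl x') hB2cl (hPfib x') hB2nwd
      ψ ψ' hψcont hψAB hψBA hψ1 hψ2 M htube
    refine ⟨(⟨fun c => u (H c), u.continuous.comp H.continuous⟩,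
      ⟨fun d => H.symm (v d), H.symm.continuous.comp v.continuous⟩), ⟨?_, ?_, ?_⟩, ?_⟩
    · intro c
      show u (H (H.symm (v c))) = c
      rw [H.apply_symm_apply]
      exact hz1 c

    · intro c
      show H.symm (v (u (H c))) = c
      rw [hz2, H.symm_apply_apply]

    · intro c hc
      show u (H c) = ef x' c
      rw [hHext c hc]
      show u (v (ef x' c)) = ef x' c
      exact hz1 _
    · -- distance estimate
      rw [Prod.dist_eq]
      apply max_lt
      · apply lt_of_le_of_lt _ hm
        rw [ContinuousMap.dist_le (by positivity)]
        intro c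
        have h1 : Agr M (H c) c := (hHagr c).1
        have h2 : Agr m (u (H c)) (u c) := hM₀ _ _ (h1.mono (by omega))
        exact dist_le_of_agr (show Agr m (z.1 c) ((fun c => u (H c)) c) from h2.symm)
      · apply lt_of_le_of_lt _ hm
        rw [ContinuousMap.dist_le (by positivity)]
        intro c
        have h1 : Agr M (H.symm (v c)) (v c) := (hHagr (v c)).2
        exact dist_le_of_agr
          (show Agr m (z.2 c) ((fun d => H.symm (v d)) c) from (h1.mono (by omega)).symm)
  -- select a continuous family of extensions
  obtain ⟨s, hscont, hsmem⟩ := selection hX Φ hΦne hΦcl hΦlsc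
  have hs1 : ∀ x, ∀ c, (s x).1 ((s x).2 c) = c := fun x => (hsmem x).1
  have hs2 : ∀ x, ∀ c, (s x).2 ((s x).1 c) = c := fun x => (hsmem x).2.1
  have hs3 : ∀ x, ∀ c ∈ A x, (s x).1 c = ef x c := fun x => (hsmem x).2.2
  -- assemble the homeomorphism
  have hsc1 : Continuous fun w : X × Cantor => (s w.1).1 w.2 := by
    have h1 : Continuous fun w : X × Cantor => ((s w.1).1, w.2) :=
      (continuous_fst.comp (hscont.comp continuous_fst)).prodMk continuous_snd
    exact continuous_eval.comp h1
  have hsc2 : Continuous fun w : Y × Cantor => (s (g.symm w.1)).2 w.2 := by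
    have h1 : Continuous fun w : Y × Cantor => ((s (g.symm w.1)).2, w.2) :=
      (continuous_snd.comp (hscont.comp (g.symm.continuous.comp continuous_fst))).prodMk
        continuous_snd
    exact continuous_eval.comp h1
  refine ⟨⟨⟨fun w => (g w.1, (s w.1).1 w.2), fun w => (g.symm w.1, (s (g.symm w.1)).2 w.2),
      ?_, ?_⟩, ?_, ?_⟩, ?_, ?_⟩
  · intro w
    simp only [g.symm_apply_apply]
    exact Prod.ext rfl (hs2 w.1 w.2)
  · intro w
    simp only [g.apply_symm_apply]
    exact Prod.ext rfl (hs1 (g.symm w.1) w.2)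
  · exact ((g.continuous.comp continuous_fst).prodMk hsc1 : _)
  · exact ((g.symm.continuous.comp continuous_fst).prodMk hsc2 : _)
  · intro p
    show (g ((p : X × Cantor)).1, (s ((p : X × Cantor)).1).1 ((p : X × Cantor)).2) =
      (f p : Y × Cantor)
    have hc : ((p : X × Cantor)).2 ∈ A ((p : X × Cantor)).1 := by
      show (((p : X × Cantor)).1, ((p : X × Cantor)).2) ∈ P'
      exact p.2
    rw [hs3 _ _ hc]
    have hpeq : p = ⟨(((p : X × Cantor)).1, ((p : X × Cantor)).2), hc⟩ := Subtype.ext rfl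
    rw [hpeq, ← hfpair]
  · intro w
    rfl
end
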